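/- arXiv:2211.00533 — 5 statements merged into one kernel-verified Lean document; each statement's English description precedes it below -/
import Mathlib

section
/- Let n ≥ 2, let I1, I2 be disjoint nonempty subsets of {1,…,n}, and let β ∈ [0, 1 − 1/n]. Then there exists a sequence of center sets {C^t}_{t≥0} ⊆ {1,…,n} and a sequence of matrices {W^t}_{t≥0} ⊆ ℝ^{n×n} such that: (1) for every t, W^t ∈ W_{n,β} and W^t is compatible with the sun-shaped graph S_{n,C^t} (i.e., the (i,j) entry of W^t is 0 whenever i ≠ j and i, j are not adjacent in S_{n,C^t}); and (2) there exist absolute constants c, C > 0 (independent of n, β, I1, I2) such that c·((1 − (|I1|+|I2|)/n)/(1−β) + 1) ≤ dist_{{S_{n,C^t}}}(I1, I2) ≤ C·((1 − (|I1|+|I2|)/n)/(1−β) + 1). In particular, if 1 − (|I1|+|I2|)/n ≥ c₀ for an absolute constant c₀ > 0, then dist_{{S_{n,C^t}}}(I1, I2) = Θ((1−β)^{−1}). -/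
set_option autoImplicit false
set_option maxHeartbeats 1000000

open Matrix MeasureTheory

noncomputable section

/-- The all-ones vector in `ℝ^n`. -/
def onesVec (n : ℕ) : Fin n → ℝ := fun _ => 1

/-- The all-ones `n × n` matrix `𝟙𝟙ᵀ`. -/
def onesMat (n : ℕ) : Matrix (Fin n) (Fin n) ℝ := Matrix.of fun _ _ => (1 : ℝ)

/-- The averaging matrix `(1/n)𝟙𝟙ᵀ`. -/
def avgMat (n : ℕ) : Matrix (Fin n) (Fin n) ℝ := (n : ℝ)⁻¹ • onesMat n

/-- Spectral norm (largest singular value) of a real matrix. -/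
def specNorm {m n : ℕ} (M : Matrix (Fin m) (Fin n) ℝ) : ℝ :=
  ‖(Matrix.toEuclideanLin (𝕜 := ℝ) M).toContinuousLinearMap‖

/-- Frobenius norm of a real matrix. -/
def frobNorm {m n : ℕ} (M : Matrix (Fin m) (Fin n) ℝ) : ℝ :=
  Real.sqrt (∑ i, ∑ j, (M i j) ^ 2)

/-- The weight-matrix class `W_{n,β}`. -/
def memW (n : ℕ) (β : ℝ) (W : Matrix (Fin n) (Fin n) ℝ) : Prop :=
  W *ᵥ onesVec n = onesVec n ∧ onesVec n ᵥ* W = onesVec n ∧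
    specNorm (W - avgMat n) ≤ β

/-- The sun-shaped graph `S_{n,C}`. -/
def sunGraph (n : ℕ) (C : Finset (Fin n)) : SimpleGraph (Fin n) where
  Adj i j := i ≠ j ∧ (i ∈ C ∨ j ∈ C)
  symm := by
    refine ⟨?_⟩
    intro i j h
    exact ⟨fun hej => h.1 hej.symm, h.2.symm⟩
  loopless := by refine ⟨?_⟩; intro i h; exact h.1 rfl

instance (n : ℕ) (C : Finset (Fin n)) : DecidableRel (sunGraph n C).Adj :=
  fun i j => inferInstanceAs (Decidable (i ≠ j ∧ (i ∈ C ∨ j ∈ C)))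

/-- One-step neighborhood `N_G(I)` (including `I` itself). -/
def nbhd {n : ℕ} (G : SimpleGraph (Fin n)) (I : Set (Fin n)) : Set (Fin n) :=
  I ∪ {j | ∃ i ∈ I, G.Adj i j}

/-- Iterated neighborhood `N_{G^t}(N_{G^{t+1}}(⋯ N_{G^{t+R-1}}(I) ⋯))`. -/
def iterNbhd {n : ℕ} (G : ℕ → SimpleGraph (Fin n)) (t : ℕ) :
    ℕ → Set (Fin n) → Set (Fin n)
  | 0, I => I
  | R + 1, I => nbhd (G t) (iterNbhd G (t + 1) R I)

/-- Directed effective distance: smallest `R ≥ 1` such that a message sent from `i`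
at some round `t` reaches `j` after `R` rounds. -/
def effDistOne {n : ℕ} (G : ℕ → SimpleGraph (Fin n)) (i j : Fin n) : ℕ :=
  sInf {R | 1 ≤ R ∧ ∃ t, j ∈ iterNbhd G t R {i}}

/-- Effective distance between two nodes. -/
def effDistPair {n : ℕ} (G : ℕ → SimpleGraph (Fin n)) (i j : Fin n) : ℕ :=
  max (effDistOne G i j) (effDistOne G j i)

/-- Effective distance between two disjoint sets of nodes. -/
def effDistSets {n : ℕ} (G : ℕ → SimpleGraph (Fin n)) (I1 I2 : Set (Fin n)) : ℕ :=
  sInf {m | ∃ i ∈ I1, ∃ j ∈ I2, m = effDistPair G i j}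

/-! Let `F` be the nodes outside `I1 ∪ I2`, `k = ⌈n(1-β)⌉` and `p = ⌊|F|/k⌋`. The weight matrix of
`S_{n,C}` that spreads `1/n` over every row and column of a center and keeps the remaining mass
`|Cᶜ|/n` on the diagonal of the leaves differs from `𝟙𝟙ᵀ/n` by `|Cᶜ|/n` times an orthogonal
projection, so it lies in `W_{n,β}` as soon as `|C| ≥ k`.

If `p ≥ 1`, split `F` into `p` disjoint blocks of size `k` that take turns as center sets. A message
leaving a node outside `F` only picks up the current center block in each round, so after `R ≤ p`
rounds it knows `R` blocks and no other node outside `F`; in round `p + 1` the center is a block it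
already knows, and it reaches everybody. If `p = 0`, every node is a center and the distance is `1`.
Either way the distance is `p + 1`, which lies between `(|F|/(n(1-β)) + 1)/3` and
`|F|/(n(1-β)) + 1`. -/

open Finset Function

lemma Finset.exists_pairwise_disjoint_subsets_card_eq {α ι : Type*} [Fintype ι] {F : Finset α}
    {k : ℕ} (h : Fintype.card ι * k ≤ #F) :
    ∃ D : ι → Finset α, (∀ r, D r ⊆ F) ∧ (∀ r, #(D r) = k) ∧ Pairwise (Disjoint on D) := by
  obtain ⟨T, hTF, hT⟩ := exists_subset_card_eq h
  let e : ι × Fin k ↪ α :=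
    (((Fintype.equivFin ι).prodCongr (Equiv.refl _)).trans <| finProdFinEquiv.trans <|
      (finCongr hT.symm).trans T.equivFin.symm).toEmbedding.trans (Embedding.subtype _)
  refine ⟨fun r => univ.map ((Embedding.sectR r _).trans e), ?_, ?_, ?_⟩
  · rintro r _ hx
    obtain ⟨s, -, rfl⟩ := mem_map.mp hx
    exact hTF (Subtype.prop _)
  · simp
  · intro r r' hrr'
    refine disjoint_left.mpr fun x hx hx' => ?_
    obtain ⟨s, -, rfl⟩ := mem_map.mp hx
    obtain ⟨s', -, hs'⟩ := mem_map.mp hx'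
    exact hrr' (congrArg Prod.fst (e.injective hs')).symm

lemma ZMod.natCast_add_ne_natCast {p : ℕ} (t : ℕ) {s : ℕ} (hs0 : 0 < s) (hsp : s < p) :
    ((t + s : ℕ) : ZMod p) ≠ t := by
  rw [Nat.cast_add, Ne, add_eq_left, ZMod.natCast_eq_zero_iff]
  exact fun hdvd => absurd (Nat.le_of_dvd hs0 hdvd) (by omega)

lemma Finset.sum_sq_card_mul_sub_sum {ι R : Type*} [CommRing R] (s : Finset ι) (f : ι → R) :
    ∑ i ∈ s, (#s * f i - ∑ j ∈ s, f j) ^ 2 =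
      #s ^ 2 * ∑ i ∈ s, f i ^ 2 - #s * (∑ j ∈ s, f j) ^ 2 := by
  simp only [sub_sq, sum_add_distrib, sum_sub_distrib, mul_pow, ← mul_sum, ← sum_mul, sum_const,
    nsmul_eq_mul]
  ring

lemma specNorm_le_of_sum_sq_le {n : ℕ} {M : Matrix (Fin n) (Fin n) ℝ} {b : ℝ} (hb : 0 ≤ b)
    (h : ∀ x : Fin n → ℝ, ∑ i, (M *ᵥ x) i ^ 2 ≤ b ^ 2 * ∑ i, x i ^ 2) : specNorm M ≤ b := by
  refine ContinuousLinearMap.opNorm_le_bound _ hb fun x => ?_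
  rw [← sq_le_sq₀ (norm_nonneg _) (by positivity), mul_pow, EuclideanSpace.real_norm_sq_eq,
    EuclideanSpace.real_norm_sq_eq]
  exact h x

lemma div_ceil_add_one_bounds {x : ℝ} (hx : 1 ≤ x) (m : ℕ) :
    (m / x + 1) / 3 ≤ ((m / ⌈x⌉₊ + 1 : ℕ) : ℝ) ∧ ((m / ⌈x⌉₊ + 1 : ℕ) : ℝ) ≤ m / x + 1 := by
  set k := ⌈x⌉₊
  have hk0 : 0 < k := Nat.ceil_pos.mpr (by linarith)
  have hxk : x ≤ k := Nat.le_ceil x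
  have hkx : (k : ℝ) < x + 1 := Nat.ceil_lt_add_one (by linarith)
  have hdiv : ((m / k : ℕ) : ℝ) * k ≤ m := by exact_mod_cast Nat.div_mul_le_self m k
  have hsucc : (m : ℝ) < k * ((m / k : ℕ) + 1) := by exact_mod_cast Nat.lt_mul_div_succ m hk0
  have hp : (0 : ℝ) ≤ (m / k : ℕ) := Nat.cast_nonneg _
  push_cast
  constructor
  · rw [div_le_iff₀ three_pos, div_add_one (show x ≠ 0 by positivity), div_le_iff₀ (by positivity)]
    nlinarith
  · rw [add_le_add_iff_right, le_div_iff₀ (by positivity)]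
    nlinarith

lemma one_sub_card_add_card_div_eq {n : ℕ} (hn : n ≠ 0) {I1 I2 : Finset (Fin n)}
    (h12 : Disjoint I1 I2) : 1 - ((#I1 : ℝ) + #I2) / n = #(I1 ∪ I2)ᶜ / n := by
  have h : (#(I1 ∪ I2) : ℝ) + #(I1 ∪ I2)ᶜ = n := by
    exact_mod_cast (card_add_card_compl _).trans (Fintype.card_fin n)
  rw [card_union_of_disjoint h12, Nat.cast_add] at h
  field_simp
  linarith

section EffDist

variable {n : ℕ} {G : ℕ → SimpleGraph (Fin n)}

lemma effDistOne_eq {i j : Fin n} {R : ℕ} (hR : 1 ≤ R) (hreach : ∃ t, j ∈ iterNbhd G t R {i})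
    (hmin : ∀ R' < R, ∀ t, j ∉ iterNbhd G t R' {i}) : effDistOne G i j = R := by
  refine le_antisymm (Nat.sInf_le ⟨hR, hreach⟩) (le_csInf ⟨R, hR, hreach⟩ ?_)
  rintro R' ⟨-, t, ht⟩
  by_contra! hlt
  exact hmin R' hlt t ht

lemma effDistSets_eq {I1 I2 : Set (Fin n)} {d : ℕ} (h1 : I1.Nonempty) (h2 : I2.Nonempty)
    (h : ∀ i ∈ I1, ∀ j ∈ I2, effDistPair G i j = d) : effDistSets G I1 I2 = d := by
  obtain ⟨i, hi⟩ := h1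
  obtain ⟨j, hj⟩ := h2
  have hset : {m | ∃ i ∈ I1, ∃ j ∈ I2, m = effDistPair G i j} = {d} := by
    ext m
    constructor
    · rintro ⟨i, hi, j, hj, rfl⟩
      exact h i hi j hj
    · rintro rfl
      exact ⟨i, hi, j, hj, (h i hi j hj).symm⟩
  rw [effDistSets, hset, csInf_singleton]

end EffDist

section SunGraph

variable {n : ℕ}

lemma nbhd_sunGraph_eq_univ {C : Finset (Fin n)} {S : Set (Fin n)} {c : Fin n}
    (hcC : c ∈ C) (hcS : c ∈ S) : nbhd (sunGraph n C) S = Set.univ := by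
  refine Set.eq_univ_of_forall fun j => ?_
  by_cases hj : j = c
  · exact Or.inl (hj ▸ hcS)
  · exact Or.inr ⟨c, hcS, Ne.symm hj, Or.inl hcC⟩

lemma nbhd_sunGraph_of_disjoint {C : Finset (Fin n)} {S : Set (Fin n)}
    (hS : S.Nonempty) (hSC : Disjoint S C) : nbhd (sunGraph n C) S = S ∪ C := by
  ext j
  simp only [nbhd, Set.mem_union, Set.mem_ofPred_eq, Finset.mem_coe]
  constructor
  · rintro (hj | ⟨s, hs, -, hsC | hjC⟩)
    · exact Or.inl hj
    · exact absurd hsC (Set.disjoint_left.mp hSC hs)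
    · exact Or.inr hjC
  · rintro (hj | hjC)
    · exact Or.inl hj
    · obtain ⟨s, hs⟩ := hS
      refine Or.inr ⟨s, hs, ?_, Or.inr hjC⟩
      rintro rfl
      exact Set.disjoint_left.mp hSC hs hjC

lemma effDistOne_sunGraph_univ {i j : Fin n} (hij : i ≠ j) :
    effDistOne (fun _ => sunGraph n univ) i j = 1 :=
  effDistOne_eq le_rfl ⟨0, Or.inr ⟨i, rfl, hij, Or.inl (mem_univ i)⟩⟩ fun R' hR' t hj => by
    obtain rfl : R' = 0 := by omega
    exact hij (Set.mem_singleton_iff.mp hj).symm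

lemma effDistSets_sunGraph_univ {I1 I2 : Finset (Fin n)} (h1 : I1.Nonempty)
    (h2 : I2.Nonempty) (h12 : Disjoint I1 I2) :
    effDistSets (fun _ => sunGraph n univ) I1 I2 = 1 := by
  refine effDistSets_eq h1 h2 fun i hi j hj => ?_
  have hij : i ≠ j := fun h => disjoint_left.mp h12 hi (h ▸ hj)
  rw [effDistPair, effDistOne_sunGraph_univ hij, effDistOne_sunGraph_univ hij.symm, max_self]

end SunGraph

section Rotating

-- Indexing the blocks by `ZMod p` makes the schedule `t ↦ D t` periodic with period `p`.
variable {n p : ℕ} {D : ZMod p → Finset (Fin n)}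

lemma iterNbhd_sunGraph_rotating (hD : Pairwise (Disjoint on D)) {i : Fin n} (hi : ∀ r, i ∉ D r)
    {R : ℕ} (hR : R ≤ p) (t : ℕ) :
    iterNbhd (fun t => sunGraph n (D t)) t R {i} = {i} ∪ {x | ∃ s < R, x ∈ D ↑(t + s)} := by
  induction R generalizing t with
  | zero => simp [iterNbhd]
  | succ R ih =>
    have hdisj : Disjoint ({i} ∪ {x | ∃ s < R, x ∈ D ↑(t + 1 + s)} : Set (Fin n)) ↑(D t) := by
      refine Set.disjoint_union_left.mpr ⟨Set.disjoint_singleton_left.mpr (hi _), ?_⟩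
      refine Set.disjoint_left.mpr ?_
      rintro x ⟨s, hs, hx⟩ hxt
      have hsame : ((t + (1 + s) : ℕ) : ZMod p) = t := by
        by_contra hne
        rw [← add_assoc] at hne
        exact disjoint_left.mp (hD hne) hx hxt
      exact ZMod.natCast_add_ne_natCast t (by omega) (by omega) hsame
    show nbhd _ (iterNbhd _ (t + 1) R {i}) = _
    rw [ih (by omega) (t + 1), nbhd_sunGraph_of_disjoint ⟨i, Or.inl rfl⟩ hdisj]
    ext x
    simp only [Set.mem_union, Set.mem_singleton_iff, Set.mem_ofPred_eq, mem_coe]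
    constructor
    · rintro ((rfl | ⟨s, hs, hx⟩) | hx)
      · exact Or.inl rfl
      · exact Or.inr ⟨s + 1, by omega, by rwa [← add_assoc, add_right_comm]⟩
      · exact Or.inr ⟨0, R.succ_pos, by rwa [add_zero]⟩
    · rintro (rfl | ⟨_ | s, hs, hx⟩)
      · exact Or.inl (Or.inl rfl)
      · exact Or.inr (by rwa [add_zero] at hx)
      · exact Or.inl (Or.inr ⟨s, by omega, by rwa [add_assoc, add_comm 1]⟩)

lemma effDistOne_sunGraph_rotating (hp : 0 < p) (hD : Pairwise (Disjoint on D))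
    (hne : (D 0).Nonempty) {i j : Fin n} (hi : ∀ r, i ∉ D r) (hj : ∀ r, j ∉ D r) (hij : i ≠ j) :
    effDistOne (fun t => sunGraph n (D t)) i j = p + 1 := by
  refine effDistOne_eq (by omega) ⟨0, ?_⟩ fun R hR t hjR => ?_
  · obtain ⟨c, hc⟩ := hne
    have hcS : c ∈ iterNbhd (fun t => sunGraph n (D t)) 1 p {i} := by
      rw [iterNbhd_sunGraph_rotating hD hi le_rfl]
      refine Or.inr ⟨p - 1, by omega, ?_⟩
      rwa [Nat.add_sub_cancel' hp, ZMod.natCast_self]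
    show j ∈ nbhd (sunGraph n (D ↑(0 : ℕ))) _
    rw [Nat.cast_zero, nbhd_sunGraph_eq_univ hc hcS]
    trivial
  · rw [iterNbhd_sunGraph_rotating hD hi (by omega)] at hjR
    rcases hjR with hji | ⟨s, -, hjs⟩
    · exact hij (Set.mem_singleton_iff.mp hji).symm
    · exact hj _ hjs

lemma effDistSets_sunGraph_rotating (hp : 0 < p) (hD : Pairwise (Disjoint on D))
    (hne : (D 0).Nonempty) {I1 I2 : Finset (Fin n)} (h1 : I1.Nonempty) (h2 : I2.Nonempty)
    (h12 : Disjoint I1 I2) (hI1 : ∀ r, Disjoint I1 (D r)) (hI2 : ∀ r, Disjoint I2 (D r)) :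
    effDistSets (fun t => sunGraph n (D t)) I1 I2 = p + 1 := by
  refine effDistSets_eq h1 h2 fun i hi j hj => ?_
  have hij : i ≠ j := fun h => disjoint_left.mp h12 hi (h ▸ hj)
  have hiD r : i ∉ D r := disjoint_left.mp (hI1 r) hi
  have hjD r : j ∉ D r := disjoint_left.mp (hI2 r) hj
  rw [effDistPair, effDistOne_sunGraph_rotating hp hD hne hiD hjD hij,
    effDistOne_sunGraph_rotating hp hD hne hjD hiD hij.symm, max_self]

end Rotating

section SunWeight

variable {n : ℕ}

def sunWeight (n : ℕ) (C : Finset (Fin n)) : Matrix (Fin n) (Fin n) ℝ :=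
  Matrix.of fun i j => if i ∈ C ∨ j ∈ C then (n : ℝ)⁻¹ else if i = j then (#Cᶜ : ℝ) / n else 0

lemma sunWeight_eq_zero_of_not_adj (C : Finset (Fin n)) {i j : Fin n} (hij : i ≠ j)
    (hadj : ¬ (sunGraph n C).Adj i j) : sunWeight n C i j = 0 := by
  have hC : ¬ (i ∈ C ∨ j ∈ C) := fun h => hadj ⟨hij, h⟩
  simp [sunWeight, hC, hij]

lemma transpose_sunWeight (C : Finset (Fin n)) : (sunWeight n C)ᵀ = sunWeight n C := by
  ext i j
  simp only [sunWeight, transpose_apply, of_apply, or_comm, eq_comm]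

lemma sunWeight_sub_avgMat_apply (C : Finset (Fin n)) (i j : Fin n) :
    (sunWeight n C - avgMat n) i j =
      if i ∈ C ∨ j ∈ C then 0 else ((if i = j then (#Cᶜ : ℝ) else 0) - 1) / n := by
  simp only [Matrix.sub_apply, sunWeight, avgMat, onesMat, of_apply, Matrix.smul_apply,
    smul_eq_mul, mul_one]
  split_ifs <;> ring

lemma sunWeight_sub_avgMat_mulVec (C : Finset (Fin n)) (x : Fin n → ℝ) (i : Fin n) :
    ((sunWeight n C - avgMat n) *ᵥ x) i =
      if i ∈ C then 0 else (#Cᶜ * x i - ∑ j ∈ Cᶜ, x j) / n := by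
  simp only [mulVec, dotProduct, sunWeight_sub_avgMat_apply]
  split_ifs with hi
  · simp [hi]
  · rw [← sum_add_sum_compl C, sum_eq_zero fun j hj => by simp [hj], zero_add,
      sum_congr rfl fun j hj => by rw [if_neg (by simpa [hi] using hj)]]
    simp only [sub_div, sub_mul, sum_sub_distrib, ite_div, ite_mul, zero_div, zero_mul, sum_ite_eq,
      if_pos (mem_compl.mpr hi), ← mul_sum]
    ring

lemma specNorm_sunWeight_sub_avgMat_le (C : Finset (Fin n)) :
    specNorm (sunWeight n C - avgMat n) ≤ #Cᶜ / n := by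
  refine specNorm_le_of_sum_sq_le (by positivity) fun x => ?_
  have hx : ∑ i ∈ Cᶜ, x i ^ 2 ≤ ∑ i, x i ^ 2 := sum_le_univ_sum_of_nonneg fun i => sq_nonneg _
  calc ∑ i, ((sunWeight n C - avgMat n) *ᵥ x) i ^ 2
      = ∑ i ∈ Cᶜ, ((#Cᶜ * x i - ∑ j ∈ Cᶜ, x j) / n) ^ 2 := by
        rw [← sum_add_sum_compl C, sum_eq_zero fun i hi => by
          rw [sunWeight_sub_avgMat_mulVec, if_pos hi, zero_pow two_ne_zero], zero_add]
        exact sum_congr rfl fun i hi => by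
          rw [sunWeight_sub_avgMat_mulVec, if_neg (mem_compl.mp hi)]
    _ = (#Cᶜ ^ 2 * ∑ i ∈ Cᶜ, x i ^ 2 - #Cᶜ * (∑ j ∈ Cᶜ, x j) ^ 2) / n ^ 2 := by
        rw [← sum_sq_card_mul_sub_sum, sum_div]
        simp only [div_pow]
    _ ≤ (#Cᶜ / n) ^ 2 * ∑ i, x i ^ 2 := by
        rw [div_pow, div_mul_eq_mul_div]
        gcongr
        nlinarith [sq_nonneg (∑ j ∈ Cᶜ, x j)]

lemma avgMat_mulVec_onesVec (hn : n ≠ 0) : avgMat n *ᵥ onesVec n = onesVec n := by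
  ext i
  simp [avgMat, onesMat, onesVec, mulVec, dotProduct, hn]

lemma sunWeight_mulVec_onesVec (hn : n ≠ 0) (C : Finset (Fin n)) :
    sunWeight n C *ᵥ onesVec n = onesVec n := by
  have h : (sunWeight n C - avgMat n) *ᵥ onesVec n = 0 := by
    ext i
    simp [sunWeight_sub_avgMat_mulVec, onesVec]
  rwa [sub_mulVec, sub_eq_zero, avgMat_mulVec_onesVec hn] at h

lemma onesVec_vecMul_sunWeight (hn : n ≠ 0) (C : Finset (Fin n)) :
    onesVec n ᵥ* sunWeight n C = onesVec n := by
  rw [← transpose_sunWeight, vecMul_transpose, sunWeight_mulVec_onesVec hn]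

lemma sunWeight_memW (hn : n ≠ 0) {C : Finset (Fin n)} {β : ℝ} (hC : n * (1 - β) ≤ #C) :
    memW n β (sunWeight n C) := by
  refine ⟨sunWeight_mulVec_onesVec hn C, onesVec_vecMul_sunWeight hn C,
    (specNorm_sunWeight_sub_avgMat_le C).trans ?_⟩
  have hcard : (#C : ℝ) + #Cᶜ = n := by exact_mod_cast card_add_card_compl C |>.trans (by simp)
  rw [div_le_iff₀ (by positivity)]
  linarith

end SunWeight

lemma exists_sunGraph_schedule {n : ℕ} {I1 I2 : Finset (Fin n)} (h1 : I1.Nonempty)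
    (h2 : I2.Nonempty) (h12 : Disjoint I1 I2) {β : ℝ} (hβ : 0 ≤ β) {k : ℕ} (hk : 0 < k)
    (hβk : n * (1 - β) ≤ k) :
    ∃ (Cseq : ℕ → Finset (Fin n)) (W : ℕ → Matrix (Fin n) (Fin n) ℝ),
      (∀ t, (Cseq t).Nonempty) ∧ (∀ t, memW n β (W t)) ∧
      (∀ t i j, i ≠ j → ¬ (sunGraph n (Cseq t)).Adj i j → W t i j = 0) ∧
      effDistSets (fun t => sunGraph n (Cseq t)) I1 I2 = #(I1 ∪ I2)ᶜ / k + 1 := by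
  obtain ⟨i, -⟩ := id h1
  have hn : n ≠ 0 := i.pos.ne'
  rcases Nat.eq_zero_or_pos (#(I1 ∪ I2)ᶜ / k) with hp | hp
  · refine ⟨fun _ => univ, fun _ => sunWeight n univ, fun _ => ⟨i, mem_univ i⟩,
      fun _ => sunWeight_memW hn ?_, fun _ _ _ => sunWeight_eq_zero_of_not_adj _, ?_⟩
    · rw [card_univ, Fintype.card_fin]
      exact mul_le_of_le_one_right (Nat.cast_nonneg n) (by linarith)
    · rw [hp, effDistSets_sunGraph_univ h1 h2 h12]
  · have : NeZero (#(I1 ∪ I2)ᶜ / k) := ⟨hp.ne'⟩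
    obtain ⟨D, hDF, hDk, hD⟩ := exists_pairwise_disjoint_subsets_card_eq
      (ι := ZMod (#(I1 ∪ I2)ᶜ / k)) (by rw [ZMod.card]; exact Nat.div_mul_le_self _ _)
    have hDne r : (D r).Nonempty := card_pos.mp (hDk r ▸ hk)
    refine ⟨fun t => D t, fun t => sunWeight n (D t), fun t => hDne t,
      fun t => sunWeight_memW hn (by rwa [hDk]), fun t _ _ => sunWeight_eq_zero_of_not_adj _,
      effDistSets_sunGraph_rotating hp hD (hDne 0) h1 h2 h12 (fun r => ?_) (fun r => ?_)⟩
    · exact (disjoint_compl_right.mono_left subset_union_left).mono_right (hDF r)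
    · exact (disjoint_compl_right.mono_left subset_union_right).mono_right (hDF r)

lemma exists_sunGraph_schedule_effDistSets_bounds {n : ℕ} {I1 I2 : Finset (Fin n)}
    (h1 : I1.Nonempty) (h2 : I2.Nonempty) (h12 : Disjoint I1 I2) {β : ℝ} (hβ0 : 0 ≤ β)
    (hβ1 : β ≤ 1 - 1 / (n : ℝ)) :
    ∃ (Cseq : ℕ → Finset (Fin n)) (W : ℕ → Matrix (Fin n) (Fin n) ℝ),
      (∀ t, (Cseq t).Nonempty) ∧ (∀ t, memW n β (W t)) ∧
      (∀ t i j, i ≠ j → ¬ (sunGraph n (Cseq t)).Adj i j → W t i j = 0) ∧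
      1 / 3 * ((1 - ((#I1 : ℝ) + #I2) / n) / (1 - β) + 1)
        ≤ (effDistSets (fun t => sunGraph n (Cseq t)) I1 I2 : ℝ) ∧
      (effDistSets (fun t => sunGraph n (Cseq t)) I1 I2 : ℝ)
        ≤ (1 - ((#I1 : ℝ) + #I2) / n) / (1 - β) + 1 := by
  obtain ⟨i, -⟩ := id h1
  have hn : (0 : ℝ) < n := by exact_mod_cast i.pos
  have hx : 1 ≤ (n : ℝ) * (1 - β) := calc
    (1 : ℝ) = n * (1 / n) := by field_simp
    _ ≤ n * (1 - β) := by gcongr; linarith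
  obtain ⟨Cseq, W, hne, hW, hWC, hd⟩ := exists_sunGraph_schedule h1 h2 h12 hβ0
    (Nat.ceil_pos.mpr (by linarith)) (Nat.le_ceil _)
  obtain ⟨hlo, hhi⟩ := div_ceil_add_one_bounds hx #(I1 ∪ I2)ᶜ
  rw [one_sub_card_add_card_div_eq i.pos.ne' h12, div_div]
  refine ⟨Cseq, W, hne, hW, hWC, ?_, ?_⟩ <;> rw [hd] <;> linarith

/-- Theorem: sun-shaped graphs realize the optimal relation between
effective distance and connectivity.  There are absolute constants `c, C > 0` such that
for every `n ≥ 2`, every pair of disjoint nonempty subsets `I1, I2` of `[n]`, and every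
`β ∈ [0, 1 - 1/n]`, there is a sequence of center sets `Cseq` and associated weight
matrices `W t ∈ W_{n,β}` compatible with the sun-shaped graphs `S_{n, Cseq t}`, whose
effective distance between `I1` and `I2` is
`Θ((1 - (|I1|+|I2|)/n)/(1-β) + 1)`.  In particular (second part), whenever
`1 - (|I1|+|I2|)/n ≥ c₀` for an absolute constant `c₀ > 0`, the effective distance is
`Θ((1-β)⁻¹)`. -/
theorem effDist_sunGraph_theta :
    (∃ c C : ℝ, 0 < c ∧ 0 < C ∧
      ∀ (n : ℕ), 2 ≤ n →
      ∀ (I1 I2 : Finset (Fin n)), I1.Nonempty → I2.Nonempty → Disjoint I1 I2 →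
      ∀ β : ℝ, 0 ≤ β → β ≤ 1 - 1 / (n : ℝ) →
      ∃ (Cseq : ℕ → Finset (Fin n)) (W : ℕ → Matrix (Fin n) (Fin n) ℝ),
        (∀ t, (Cseq t).Nonempty) ∧
        (∀ t, memW n β (W t)) ∧
        (∀ t i j, i ≠ j → ¬ (sunGraph n (Cseq t)).Adj i j → W t i j = 0) ∧
        c * ((1 - ((I1.card : ℝ) + (I2.card : ℝ)) / (n : ℝ)) / (1 - β) + 1)
          ≤ (effDistSets (fun t => sunGraph n (Cseq t)) ↑I1 ↑I2 : ℝ) ∧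
        (effDistSets (fun t => sunGraph n (Cseq t)) ↑I1 ↑I2 : ℝ)
          ≤ C * ((1 - ((I1.card : ℝ) + (I2.card : ℝ)) / (n : ℝ)) / (1 - β) + 1))
    ∧
    (∀ c₀ : ℝ, 0 < c₀ →
      ∃ c' C' : ℝ, 0 < c' ∧ 0 < C' ∧
      ∀ (n : ℕ), 2 ≤ n →
      ∀ (I1 I2 : Finset (Fin n)), I1.Nonempty → I2.Nonempty → Disjoint I1 I2 →
      ∀ β : ℝ, 0 ≤ β → β ≤ 1 - 1 / (n : ℝ) →
      c₀ ≤ 1 - ((I1.card : ℝ) + (I2.card : ℝ)) / (n : ℝ) →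
      ∃ (Cseq : ℕ → Finset (Fin n)) (W : ℕ → Matrix (Fin n) (Fin n) ℝ),
        (∀ t, (Cseq t).Nonempty) ∧
        (∀ t, memW n β (W t)) ∧
        (∀ t i j, i ≠ j → ¬ (sunGraph n (Cseq t)).Adj i j → W t i j = 0) ∧
        c' * (1 - β)⁻¹
          ≤ (effDistSets (fun t => sunGraph n (Cseq t)) ↑I1 ↑I2 : ℝ) ∧
        (effDistSets (fun t => sunGraph n (Cseq t)) ↑I1 ↑I2 : ℝ)
          ≤ C' * (1 - β)⁻¹) := by
  refine ⟨⟨1 / 3, 1, by norm_num, one_pos, fun n _ I1 I2 h1 h2 h12 β hβ0 hβ1 => ?_⟩,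
    fun c₀ hc₀ => ⟨c₀ / 3, 2, by positivity, two_pos, fun n hn I1 I2 h1 h2 h12 β hβ0 hβ1 hX => ?_⟩⟩
  · obtain ⟨Cseq, W, hne, hW, hWC, hlo, hhi⟩ :=
      exists_sunGraph_schedule_effDistSets_bounds h1 h2 h12 hβ0 hβ1
    exact ⟨Cseq, W, hne, hW, hWC, hlo, hhi.trans_eq (one_mul _).symm⟩
  · obtain ⟨Cseq, W, hne, hW, hWC, hlo, hhi⟩ :=
      exists_sunGraph_schedule_effDistSets_bounds h1 h2 h12 hβ0 hβ1
    set X := 1 - ((I1.card : ℝ) + (I2.card : ℝ)) / (n : ℝ)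
    have hX1 : X ≤ 1 := sub_le_self _ (by positivity)
    have hβ : 0 < 1 - β := by
      have : (0 : ℝ) < 1 / n := one_div_pos.mpr (by exact_mod_cast (by omega : 0 < n))
      linarith
    have hinv : 1 ≤ (1 - β)⁻¹ := one_le_inv₀ hβ |>.mpr (by linarith)
    refine ⟨Cseq, W, hne, hW, hWC, le_trans ?_ hlo, hhi.trans ?_⟩
    · have := mul_le_mul_of_nonneg_right hX (inv_nonneg.mpr hβ.le)
      rw [div_eq_mul_inv X]
      linarith
    · have := mul_le_mul_of_nonneg_right hX1 (inv_nonneg.mpr hβ.le)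
      rw [div_eq_mul_inv X]
      linarith

end
end

section
/- Let d ≥ 1 and let h : ℝ^d → ℝ be defined as in the context. Then: (1) h(0) − inf_{x∈ℝ^d} h(x) ≤ 12d; (2) h has 152-Lipschitz gradient, i.e., ‖∇h(x) − ∇h(y)‖ ≤ 152‖x − y‖ for all x, y ∈ ℝ^d; (3) ‖∇h(x)‖_∞ ≤ 23 for all x ∈ ℝ^d; and (4) ‖∇h(x)‖_∞ ≥ 1 for every x ∈ ℝ^d with x_d = 0. -/
set_option autoImplicit false
set_option maxHeartbeats 1000000

open MeasureTheory

noncomputable section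

/-- The bump `ψ` from Arjevani et al. -/
def ψfun (z : ℝ) : ℝ := if z ≤ 1 / 2 then 0 else Real.exp (1 - 1 / (2 * z - 1) ^ 2)

/-- The soft step `φ(z) = √e ∫_{-∞}^z e^{-t²/2} dt`. -/
def φfun (z : ℝ) : ℝ := Real.sqrt (Real.exp 1) * ∫ t in Set.Iic z, Real.exp (-t ^ 2 / 2)

/-- The hard zero-chain function `h` on `ℝ^{d+1}` (coordinates are 0-based: the paper's
`x_j` is `x ⟨j-1⟩`). -/
def hardFun {d : ℕ} (x : EuclideanSpace ℝ (Fin (d + 1))) : ℝ :=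
  -(ψfun 1) * φfun (x 0) +
    ∑ j : Fin d,
      (ψfun (-(x j.castSucc)) * φfun (-(x j.succ)) - ψfun (x j.castSucc) * φfun (x j.succ))

/-- `h₁`: the part of `h` with pairs `(x_j, x_{j+1})` for (1-based) even `j`,
doubled, together with the doubled first term. -/
def hardFun1 {d : ℕ} (x : EuclideanSpace ℝ (Fin (d + 1))) : ℝ :=
  -2 * ψfun 1 * φfun (x 0) +
    2 * ∑ j : Fin d, if Even ((j : ℕ) + 1) then
      ψfun (-(x j.castSucc)) * φfun (-(x j.succ)) - ψfun (x j.castSucc) * φfun (x j.succ)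
    else 0

/-- `h₂`: the doubled part of `h` with pairs `(x_j, x_{j+1})` for (1-based) odd `j`. -/
def hardFun2 {d : ℕ} (x : EuclideanSpace ℝ (Fin (d + 1))) : ℝ :=
  2 * ∑ j : Fin d, if Odd ((j : ℕ) + 1) then
      ψfun (-(x j.castSucc)) * φfun (-(x j.succ)) - ψfun (x j.castSucc) * φfun (x j.succ)
    else 0

/-- `prog x`: `0` if `x = 0`, otherwise the largest (1-based) index of a nonzero
coordinate of `x`. -/
def progVec {m : ℕ} (x : EuclideanSpace ℝ (Fin m)) : ℕ :=
  sSup {k | ∃ j : Fin m, x j ≠ 0 ∧ k = (j : ℕ) + 1}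

/-!
With `x₋₁ := 1`, `h(x) = ∑ₖ m(x_{k-1}, x_k)` where `m(a, b) = ψ(-a) φ(-b) - ψ(a) φ(b)`. Since `ψ`
and all its derivatives vanish on `(-∞, 1/2]`, at most one of the two products in `m`, or in any
partial derivative of `m`, is nonzero, so each such partial is bounded by one bound on a derivative
of `ψ` times one on a derivative of `φ`. Coordinate `k` of `∇h` is `∂_b m(x_{k-1}, x_k) +
∂_a m(x_k, x_{k+1})`: the sup bounds on these give (3), their Lipschitz bounds summed over the chain
give (2), and at the first `k` with `|x_k| < 1` we have `|x_{k-1}| ≥ 1`, which forces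
`∂_b m ≤ -1` while `∂_a m ≤ 0`, whence (4). Part (1) is `m ≤ 0` for `a ≥ 0` and `m ≥ -e·√(2πe)`.

The function `ψ` is `C²` because `ψ`, `ψ'`, `ψ''` are combinations of
`z ↦ s ^ n * exp (1 - s ^ 2)`, `s = (2z - 1)⁻¹`, each of which is `O((z - 1/2)²)` at `1/2`.
-/

open Real Filter Topology Asymptotics

theorem hasDerivAt_zero_of_abs_le_mul_sq {f : ℝ → ℝ} {a C : ℝ}
    (h : ∀ z, |f z| ≤ C * (z - a) ^ 2) : HasDerivAt f 0 a := by
  have hfa : f a = 0 := abs_nonpos_iff.1 (by simpa using h a)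
  rw [hasDerivAt_iff_isLittleO]
  simp only [hfa, sub_zero, smul_zero]
  refine (IsBigO.of_bound C (Eventually.of_forall fun z => ?_)).trans_isLittleO
    (isLittleO_pow_sub_sub a one_lt_two)
  simpa [Real.norm_eq_abs, sq_abs] using h z

theorem abs_sub_le_of_hasDerivAt_of_hasDerivAt {f f₁ f₂ : ℝ → ℝ → ℝ} {α β : ℝ}
    (h₁ : ∀ a b, HasDerivAt (f · b) (f₁ a b) a) (h₂ : ∀ a b, HasDerivAt (f a ·) (f₂ a b) b)
    (hα : ∀ a b, |f₁ a b| ≤ α) (hβ : ∀ a b, |f₂ a b| ≤ β) (a b a' b' : ℝ) :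
    |f a b - f a' b'| ≤ α * |a - a'| + β * |b - b'| := by
  have ha := convex_univ.norm_image_sub_le_of_norm_hasDerivWithin_le
    (fun z _ => (h₁ z b).hasDerivWithinAt) (fun z _ => hα z b) (Set.mem_univ a') (Set.mem_univ a)
  have hb := convex_univ.norm_image_sub_le_of_norm_hasDerivWithin_le
    (fun z _ => (h₂ a' z).hasDerivWithinAt) (fun z _ => hβ a' z) (Set.mem_univ b') (Set.mem_univ b)
  simp only [Real.norm_eq_abs] at ha hb
  calc |f a b - f a' b'| ≤ |f a b - f a' b| + |f a' b - f a' b'| := abs_sub_le _ _ _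
    _ ≤ α * |a - a'| + β * |b - b'| := add_le_add ha hb

theorem sum_sq_le_of_abs_le {ι : Type*} [Fintype ι] {u p q : ι → ℝ} {a b r : ℝ} (ha : 0 ≤ a)
    (hb : 0 ≤ b) (hp : ∑ k, p k ^ 2 ≤ r ^ 2) (hq : ∑ k, q k ^ 2 ≤ r ^ 2)
    (h : ∀ k, |u k| ≤ a * |p k| + b * |q k|) : ∑ k, u k ^ 2 ≤ ((a + b) * r) ^ 2 :=
  calc ∑ k, u k ^ 2 ≤ ∑ k, (a + b) * (a * p k ^ 2 + b * q k ^ 2) := by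
        refine Finset.sum_le_sum fun k _ => ?_
        have hu : u k ^ 2 ≤ (a * |p k| + b * |q k|) ^ 2 := by
          rw [← sq_abs (u k)]; exact pow_le_pow_left₀ (abs_nonneg _) (h k) 2
        have hgap : (a + b) * (a * p k ^ 2 + b * q k ^ 2) - (a * |p k| + b * |q k|) ^ 2 =
            a * b * (|p k| - |q k|) ^ 2 := by
          rw [← sq_abs (p k), ← sq_abs (q k)]; ring
        nlinarith [mul_nonneg (mul_nonneg ha hb) (sq_nonneg (|p k| - |q k|))]
    _ = (a + b) * (a * ∑ k, p k ^ 2 + b * ∑ k, q k ^ 2) := by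
        rw [Finset.mul_sum, Finset.mul_sum, ← Finset.sum_add_distrib, Finset.mul_sum]
    _ ≤ (a + b) * (a * r ^ 2 + b * r ^ 2) := by gcongr
    _ = ((a + b) * r) ^ 2 := by ring

theorem sum_sq_castSucc_le {n : ℕ} (v : EuclideanSpace ℝ (Fin (n + 1))) :
    ∑ j : Fin n, v j.castSucc ^ 2 ≤ ‖v‖ ^ 2 := by
  rw [EuclideanSpace.real_norm_sq_eq, Fin.sum_univ_castSucc]
  linarith [sq_nonneg (v (Fin.last n))]

theorem sum_sq_succ_le {n : ℕ} (v : EuclideanSpace ℝ (Fin (n + 1))) :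
    ∑ j : Fin n, v j.succ ^ 2 ≤ ‖v‖ ^ 2 := by
  rw [EuclideanSpace.real_norm_sq_eq, Fin.sum_univ_succ]
  linarith [sq_nonneg (v 0)]

theorem pow_le_mul_exp_sq (n : ℕ) {s : ℝ} (hs : 0 ≤ s) :
    s ^ n ≤ (1 + n.factorial) * exp (s ^ 2) := by
  have hsplit : s ^ n ≤ 1 + (s ^ 2) ^ n := by
    rcases le_total s 1 with h | h
    · linarith [pow_le_one₀ hs h (n := n), pow_nonneg (sq_nonneg s) n]
    · rw [← pow_mul]
      linarith [pow_le_pow_right₀ h (by omega : n ≤ 2 * n), zero_le_one' ℝ]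
  have hpow : (s ^ 2) ^ n ≤ n.factorial * exp (s ^ 2) := by
    have := pow_div_factorial_le_exp (s ^ 2) (sq_nonneg s) n
    rwa [div_le_iff₀ (by positivity), mul_comm] at this
  have hone : 1 ≤ exp (s ^ 2) := one_le_exp (sq_nonneg s)
  nlinarith

theorem taylor_five_le_exp {x : ℝ} (hx : 0 ≤ x) :
    1 + x + x ^ 2 / 2 + x ^ 3 / 6 + x ^ 4 / 24 + x ^ 5 / 120 ≤ exp x := by
  have := sum_le_exp_of_nonneg hx 6
  norm_num [Finset.sum_range_succ, Nat.factorial] at this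
  linarith

theorem four_mul_pow_three_mul_exp_le {s : ℝ} (hs : 0 ≤ s) :
    4 * s ^ 3 * exp (1 - s ^ 2) ≤ 4.47 := by
  have htaylor := sum_le_exp_of_nonneg (sq_nonneg s) 7
  norm_num [Finset.sum_range_succ, Nat.factorial] at htaylor
  -- `10.8731276 ≥ 4e`; the left side peaks at `s = √(3/2) ≈ 1.2247`
  have hpoly : 10.8731276 * s ^ 3 ≤ 4.47 * (1 + s ^ 2 + (s ^ 2) ^ 2 / 2 + (s ^ 2) ^ 3 / 6 +
      (s ^ 2) ^ 4 / 24 + (s ^ 2) ^ 5 / 120 + (s ^ 2) ^ 6 / 720) := by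
    nlinarith [sq_nonneg (s ^ 2 - 3 / 2), sq_nonneg (s - 1.2247), sq_nonneg (s * (s - 1.2247)),
      sq_nonneg (s ^ 2 * (s - 1.2247)), sq_nonneg (s ^ 3 * (s - 1.2247)),
      sq_nonneg (s ^ 4 * (s - 1.2247)), sq_nonneg (s ^ 5 * (s - 1.2247)), pow_nonneg hs 3,
      pow_nonneg hs 5]
  rw [exp_sub, ← mul_div_assoc, div_le_iff₀ (exp_pos _)]
  nlinarith [exp_one_lt_d9, pow_nonneg hs 3]

theorem cubic_le_exp {w : ℝ} (hw : 0 ≤ w) : 16 * w ^ 3 - 24 * w ^ 2 ≤ 11.956 * exp w := by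
  rcases le_total w 3 with h3 | h3
  · have := taylor_five_le_exp hw
    nlinarith [mul_nonneg hw (sub_nonneg.2 h3), pow_nonneg hw 3, pow_nonneg hw 4,
      pow_nonneg hw 5, sq_nonneg (w - 2), mul_nonneg (mul_nonneg hw hw) (sub_nonneg.2 h3)]
  · -- `exp w = exp 3 * exp (w - 3)`, expanded to fifth order around the maximiser `w ≈ 3.686`
    obtain ⟨x, hx, rfl⟩ : ∃ x, 0 ≤ x ∧ w = x + 3 := ⟨w - 3, by linarith, by ring⟩
    have he3 : 20.0855 ≤ exp 3 := by
      have h := pow_le_pow_left₀ (by norm_num) exp_one_gt_d9.le 3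
      rw [← exp_nat_mul] at h
      norm_num at h ⊢
      linarith
    have hpoly : 16 * (x + 3) ^ 3 - 24 * (x + 3) ^ 2 ≤
        11.956 * (20.0855 * (1 + x + x ^ 2 / 2 + x ^ 3 / 6 + x ^ 4 / 24 + x ^ 5 / 120)) := by
      nlinarith [pow_nonneg hx 3, pow_nonneg hx 4, pow_nonneg hx 5, sq_nonneg (x - 0.686),
        mul_nonneg hx (sq_nonneg (x - 0.686)), mul_nonneg (mul_nonneg hx hx) (sq_nonneg (x - 0.686))]
    have := mul_le_mul he3 (taylor_five_le_exp hx) (by positivity) (exp_pos 3).le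
    rw [← exp_add, add_comm 3] at this
    linarith

theorem abs_cubic_mul_exp_le {w : ℝ} (hw : 0 ≤ w) :
    |16 * w ^ 3 - 24 * w ^ 2| * exp (1 - w) ≤ 32.5 := by
  have hlow : 24 * w ^ 2 - 16 * w ^ 3 ≤ 11.956 * exp w := by
    nlinarith [quadratic_le_exp_of_nonneg hw, sq_nonneg (w - 1), mul_nonneg hw (sq_nonneg (w - 1))]
  have habs : |16 * w ^ 3 - 24 * w ^ 2| ≤ 11.956 * exp w :=
    abs_le.2 ⟨by linarith, cubic_le_exp hw⟩
  rw [exp_sub, ← mul_div_assoc, div_le_iff₀ (exp_pos _)]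
  nlinarith [exp_one_lt_d9, exp_pos 1, abs_nonneg (16 * w ^ 3 - 24 * w ^ 2)]

def flatPow (n : ℕ) (z : ℝ) : ℝ :=
  if z ≤ 1 / 2 then 0 else ((2 * z - 1)⁻¹) ^ n * exp (1 - ((2 * z - 1)⁻¹) ^ 2)

theorem flatPow_of_le {n : ℕ} {z : ℝ} (h : z ≤ 1 / 2) : flatPow n z = 0 := if_pos h

theorem flatPow_of_lt {n : ℕ} {z : ℝ} (h : 1 / 2 < z) :
    flatPow n z = ((2 * z - 1)⁻¹) ^ n * exp (1 - ((2 * z - 1)⁻¹) ^ 2) := if_neg h.not_ge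

theorem flatPow_nonneg (n : ℕ) (z : ℝ) : 0 ≤ flatPow n z := by
  rcases le_or_gt z (1 / 2) with h | h
  · rw [flatPow_of_le h]
  · rw [flatPow_of_lt h]
    have : 0 < 2 * z - 1 := by linarith
    positivity

theorem abs_flatPow_le_mul_sq (n : ℕ) (z : ℝ) :
    |flatPow n z| ≤ 4 * exp 1 * (1 + (n + 2).factorial) * (z - 1 / 2) ^ 2 := by
  rw [abs_of_nonneg (flatPow_nonneg n z)]
  rcases le_or_gt z (1 / 2) with h | h
  · rw [flatPow_of_le h]; positivity
  · rw [flatPow_of_lt h]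
    have hu : 0 < 2 * z - 1 := by linarith
    set s := (2 * z - 1)⁻¹ with hs
    have hs0 : 0 < s := inv_pos.2 hu
    have hz : (z - 1 / 2) ^ 2 = 1 / (4 * s ^ 2) := by rw [hs]; field_simp; ring
    have hp := pow_le_mul_exp_sq (n + 2) hs0.le
    rw [hz, exp_sub]
    calc s ^ n * (exp 1 / exp (s ^ 2)) = exp 1 * s ^ (n + 2) / exp (s ^ 2) / s ^ 2 := by
          field_simp; ring
      _ ≤ exp 1 * ((1 + (n + 2).factorial) * exp (s ^ 2)) / exp (s ^ 2) / s ^ 2 := by gcongr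
      _ = 4 * exp 1 * (1 + (n + 2).factorial) * (1 / (4 * s ^ 2)) := by field_simp

theorem hasDerivAt_flatPow (n : ℕ) (z : ℝ) :
    HasDerivAt (flatPow n) (-(2 * n) * flatPow (n + 1) z + 4 * flatPow (n + 3) z) z := by
  rcases lt_trichotomy z (1 / 2) with h | rfl | h
  · have hloc : flatPow n =ᶠ[𝓝 z] fun _ => 0 := by
      filter_upwards [eventually_lt_nhds h] with w hw using flatPow_of_le hw.le
    rw [flatPow_of_le h.le, flatPow_of_le h.le]
    simpa using (hasDerivAt_const z (0 : ℝ)).congr_of_eventuallyEq hloc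
  · rw [flatPow_of_le le_rfl, flatPow_of_le le_rfl]
    simpa using hasDerivAt_zero_of_abs_le_mul_sq (abs_flatPow_le_mul_sq n)
  · have hu : 2 * z - 1 ≠ 0 := by linarith
    have hloc : (fun w => ((2 * w - 1)⁻¹) ^ n * exp (1 - ((2 * w - 1)⁻¹) ^ 2)) =ᶠ[𝓝 z]
        flatPow n := by
      filter_upwards [eventually_gt_nhds h] with w hw using (flatPow_of_lt hw).symm
    have hs : HasDerivAt (fun w => (2 * w - 1)⁻¹) (-2 * ((2 * z - 1)⁻¹) ^ 2) z :=
      ((((hasDerivAt_id' z).const_mul 2).sub_const 1).inv hu).congr_deriv (by field_simp)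
    have := ((hasDerivAt_pow n _).mul ((hasDerivAt_pow 2 _).const_sub 1).exp).comp z hs
    refine (this.congr_of_eventuallyEq hloc.symm).congr_deriv ?_
    rw [flatPow_of_lt h, flatPow_of_lt h]
    set s := (2 * z - 1)⁻¹
    rcases n with _ | n
    · simp; ring
    · simp only [Nat.add_sub_cancel]; push_cast; ring

theorem ψfun_eq_flatPow : ψfun = flatPow 0 := by
  funext z
  unfold ψfun flatPow
  split_ifs <;> simp [one_div, inv_pow]

def ψfun' (z : ℝ) : ℝ := 4 * flatPow 3 z

def ψfun'' (z : ℝ) : ℝ := 16 * flatPow 6 z - 24 * flatPow 4 z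

theorem hasDerivAt_ψfun (z : ℝ) : HasDerivAt ψfun (ψfun' z) z := by
  rw [ψfun_eq_flatPow]
  exact (hasDerivAt_flatPow 0 z).congr_deriv (by simp [ψfun'])

theorem hasDerivAt_ψfun' (z : ℝ) : HasDerivAt ψfun' (ψfun'' z) z :=
  ((hasDerivAt_flatPow 3 z).const_mul 4).congr_deriv (by simp only [ψfun'']; push_cast; ring)

theorem ψfun_of_nonpos {z : ℝ} (h : z ≤ 0) : ψfun z = 0 := by
  rw [ψfun_eq_flatPow, flatPow_of_le (by linarith)]

theorem ψfun'_of_nonpos {z : ℝ} (h : z ≤ 0) : ψfun' z = 0 := by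
  rw [ψfun', flatPow_of_le (by linarith), mul_zero]

theorem ψfun''_of_nonpos {z : ℝ} (h : z ≤ 0) : ψfun'' z = 0 := by
  rw [ψfun'', flatPow_of_le (by linarith), flatPow_of_le (by linarith)]; ring

theorem ψfun_nonneg (z : ℝ) : 0 ≤ ψfun z := by
  rw [ψfun_eq_flatPow]; exact flatPow_nonneg 0 z

theorem ψfun'_nonneg (z : ℝ) : 0 ≤ ψfun' z := mul_nonneg zero_le_four (flatPow_nonneg 3 z)

theorem one_le_ψfun {z : ℝ} (h : 1 ≤ z) : 1 ≤ ψfun z := by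
  rw [ψfun_eq_flatPow, flatPow_of_lt (by linarith), pow_zero, one_mul]
  refine one_le_exp (sub_nonneg.2 (pow_le_one₀ (inv_nonneg.2 ?_) (inv_le_one_of_one_le₀ ?_))) <;>
  linarith

theorem abs_ψfun_le (z : ℝ) : |ψfun z| ≤ 2.72 := by
  rw [abs_of_nonneg (ψfun_nonneg z), ψfun_eq_flatPow]
  rcases le_or_gt z (1 / 2) with h | h
  · rw [flatPow_of_le h]; norm_num
  · rw [flatPow_of_lt h, pow_zero, one_mul]
    have : exp (1 - ((2 * z - 1)⁻¹) ^ 2) ≤ exp 1 := exp_le_exp.2 (by nlinarith)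
    linarith [exp_one_lt_d9]

theorem abs_ψfun'_le (z : ℝ) : |ψfun' z| ≤ 4.47 := by
  rw [abs_of_nonneg (ψfun'_nonneg z), ψfun']
  rcases le_or_gt z (1 / 2) with h | h
  · rw [flatPow_of_le h]; norm_num
  · rw [flatPow_of_lt h, ← mul_assoc]
    exact four_mul_pow_three_mul_exp_le (inv_pos.2 (by linarith)).le

theorem abs_ψfun''_le (z : ℝ) : |ψfun'' z| ≤ 32.5 := by
  rw [ψfun'']
  rcases le_or_gt z (1 / 2) with h | h
  · rw [flatPow_of_le h, flatPow_of_le h]; norm_num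
  · have := abs_cubic_mul_exp_le (sq_nonneg (2 * z - 1)⁻¹)
    rw [flatPow_of_lt h, flatPow_of_lt h]
    set s := (2 * z - 1)⁻¹
    rw [← abs_of_pos (exp_pos (1 - s ^ 2)), ← abs_mul] at this
    rwa [show 16 * (s ^ 6 * exp (1 - s ^ 2)) - 24 * (s ^ 4 * exp (1 - s ^ 2)) =
      (16 * (s ^ 2) ^ 3 - 24 * (s ^ 2) ^ 2) * exp (1 - s ^ 2) by ring]

def φfun' (z : ℝ) : ℝ := exp ((1 - z ^ 2) / 2)

def φfun'' (z : ℝ) : ℝ := -z * exp ((1 - z ^ 2) / 2)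

theorem integrable_exp_neg_sq_div_two : Integrable fun t : ℝ => exp (-t ^ 2 / 2) := by
  simpa [neg_div, div_eq_inv_mul] using integrable_exp_neg_mul_sq (by norm_num : (0 : ℝ) < 1 / 2)

theorem sqrt_exp_one_le : √(exp 1) ≤ 1.6488 :=
  (sqrt_le_left (by norm_num)).2 (by linarith [exp_one_lt_d9])

theorem hasDerivAt_φfun (z : ℝ) : HasDerivAt φfun (φfun' z) z := by
  have hint := integrable_exp_neg_sq_div_two
  have hsplit : ∀ w, φfun w = √(exp 1) * (∫ t in Set.Iic 0, exp (-t ^ 2 / 2)) +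
      √(exp 1) * ∫ t in (0 : ℝ)..w, exp (-t ^ 2 / 2) := fun w => by
    rw [φfun, ← intervalIntegral.integral_Iic_sub_Iic hint.integrableOn hint.integrableOn]
    ring
  have hcont : Continuous fun t : ℝ => exp (-t ^ 2 / 2) := by fun_prop
  have hftc := intervalIntegral.integral_hasDerivAt_right (hint.intervalIntegrable (a := 0) (b := z))
    (hcont.stronglyMeasurableAtFilter _ _) hcont.continuousAt
  rw [funext hsplit]
  refine (hftc.const_mul _).const_add _ |>.congr_deriv ?_
  rw [φfun', ← exp_half, ← exp_add]
  ring_nf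

theorem hasDerivAt_φfun' (z : ℝ) : HasDerivAt φfun' (φfun'' z) z := by
  have := (((hasDerivAt_pow 2 z).const_sub 1).div_const 2).exp
  exact this.congr_deriv (by rw [φfun'']; push_cast; ring)

theorem φfun_nonneg (z : ℝ) : 0 ≤ φfun z :=
  mul_nonneg (sqrt_nonneg _) (integral_nonneg fun _ => (exp_pos _).le)

theorem abs_φfun_le (z : ℝ) : |φfun z| ≤ 4.133 := by
  rw [abs_of_nonneg (φfun_nonneg z)]
  have hle : ∫ t in Set.Iic z, exp (-t ^ 2 / 2) ≤ ∫ t, exp (-t ^ 2 / 2) :=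
    setIntegral_le_integral integrable_exp_neg_sq_div_two
      (Eventually.of_forall fun _ => (exp_pos _).le)
  have htotal : ∫ t, exp (-t ^ 2 / 2) ≤ 2.50664 :=
    calc ∫ t, exp (-t ^ 2 / 2) = ∫ t, exp (-(1 / 2) * t ^ 2) := by congr 1; funext t; ring_nf
      _ = √(π / (1 / 2)) := integral_gaussian _
      _ ≤ 2.50664 := (sqrt_le_left (by norm_num)).2 (by linarith [pi_lt_d6])
  calc φfun z ≤ 1.6488 * 2.50664 :=
        mul_le_mul sqrt_exp_one_le (hle.trans htotal) (integral_nonneg fun _ => (exp_pos _).le)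
          (by norm_num)
    _ ≤ 4.133 := by norm_num

theorem φfun'_pos (z : ℝ) : 0 < φfun' z := exp_pos _

theorem abs_φfun'_le (z : ℝ) : |φfun' z| ≤ 1.6488 := by
  rw [abs_of_pos (φfun'_pos z)]
  refine le_trans ?_ sqrt_exp_one_le
  rw [φfun', ← exp_half]
  exact exp_le_exp.2 (by nlinarith)

theorem one_le_φfun' {z : ℝ} (h : |z| ≤ 1) : 1 ≤ φfun' z :=
  one_le_exp (by nlinarith [sq_abs z, abs_nonneg z])

theorem abs_φfun''_le (z : ℝ) : |φfun'' z| ≤ 1 := by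
  have hz : |z| ≤ exp ((z ^ 2 - 1) / 2) := by
    nlinarith [add_one_le_exp ((z ^ 2 - 1) / 2), sq_nonneg (|z| - 1), sq_abs z]
  rw [φfun'', abs_mul, abs_neg, abs_of_pos (exp_pos _)]
  calc |z| * exp ((1 - z ^ 2) / 2) ≤ exp ((z ^ 2 - 1) / 2) * exp ((1 - z ^ 2) / 2) := by gcongr
    _ = 1 := by rw [← exp_add]; ring_nf; exact exp_zero

section MirrorPair

variable {F G F' G' : ℝ → ℝ} {ε : ℝ}

/-- The summands of `h` are `mirrorPair (-1) ψfun φfun`; differentiating flips the sign of `ε`. -/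
def mirrorPair (ε : ℝ) (F G : ℝ → ℝ) (a b : ℝ) : ℝ := F (-a) * G (-b) + ε * (F a * G b)

theorem HasFDerivAt.mirrorPair {E : Type*} [NormedAddCommGroup E] [NormedSpace ℝ E]
    {u w : E → ℝ} {u' w' : E →L[ℝ] ℝ} {x : E} (hu : HasFDerivAt u u' x)
    (hw : HasFDerivAt w w' x) (hF : ∀ z, HasDerivAt F (F' z) z) (hG : ∀ z, HasDerivAt G (G' z) z) :
    HasFDerivAt (fun y => mirrorPair ε F G (u y) (w y))
      (-(mirrorPair (-ε) F' G (u x) (w x) • u' + mirrorPair (-ε) F G' (u x) (w x) • w')) x := by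
  have h₁ := ((hF _).comp_hasFDerivAt x hu.neg).mul ((hG _).comp_hasFDerivAt x hw.neg)
  have h₂ := ((hF _).comp_hasFDerivAt x hu).mul ((hG _).comp_hasFDerivAt x hw)
  refine (h₁.add (h₂.const_mul ε)).congr_fderiv ?_
  ext v
  simp [_root_.mirrorPair]
  ring

theorem hasDerivAt_mirrorPair_fst (hF : ∀ z, HasDerivAt F (F' z) z) (a b : ℝ) :
    HasDerivAt (mirrorPair ε F G · b) (-mirrorPair (-ε) F' G a b) a := by
  have h₁ := ((hF (-a)).comp a (hasDerivAt_neg a)).mul_const (G (-b))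
  have h₂ := ((hF a).mul_const (G b)).const_mul ε
  exact (h₁.add h₂).congr_deriv (by simp only [mirrorPair]; ring)

theorem hasDerivAt_mirrorPair_snd (hG : ∀ z, HasDerivAt G (G' z) z) (a b : ℝ) :
    HasDerivAt (mirrorPair ε F G a ·) (-mirrorPair (-ε) F G' a b) b := by
  have h₁ := ((hG (-b)).comp b (hasDerivAt_neg b)).const_mul (F (-a))
  have h₂ := ((hG b).const_mul (F a)).const_mul ε
  exact (h₁.add h₂).congr_deriv (by simp only [mirrorPair]; ring)

/-- Since `F` vanishes on `(-∞, 0]`, at most one of the two products is nonzero. -/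
theorem abs_mirrorPair_le {M C : ℝ} (hε : |ε| ≤ 1) (hF0 : ∀ z ≤ 0, F z = 0)
    (hF : ∀ z, |F z| ≤ M) (hG : ∀ z, |G z| ≤ C) (a b : ℝ) : |mirrorPair ε F G a b| ≤ M * C := by
  have hM : 0 ≤ M := (abs_nonneg _).trans (hF 0)
  rcases le_total a 0 with ha | ha
  · rw [mirrorPair, hF0 a ha, zero_mul, mul_zero, add_zero, abs_mul]
    exact mul_le_mul (hF _) (hG _) (abs_nonneg _) hM
  · rw [mirrorPair, hF0 (-a) (by linarith), zero_mul, zero_add, abs_mul, abs_mul]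
    calc |ε| * (|F a| * |G b|) ≤ 1 * (M * C) := by gcongr; exacts [hF a, hG b]
      _ = M * C := one_mul _

theorem abs_mirrorPair_sub_le {M M' C C' : ℝ} (hε : |ε| ≤ 1) (hF0 : ∀ z ≤ 0, F z = 0)
    (hF'0 : ∀ z ≤ 0, F' z = 0) (hF : ∀ z, HasDerivAt F (F' z) z)
    (hG : ∀ z, HasDerivAt G (G' z) z) (hFM : ∀ z, |F z| ≤ M) (hF'M : ∀ z, |F' z| ≤ M')
    (hGC : ∀ z, |G z| ≤ C) (hG'C : ∀ z, |G' z| ≤ C') (a b a' b' : ℝ) :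
    |mirrorPair ε F G a b - mirrorPair ε F G a' b'| ≤ M' * C * |a - a'| + M * C' * |b - b'| := by
  have hε' : |-ε| ≤ 1 := by rwa [abs_neg]
  refine abs_sub_le_of_hasDerivAt_of_hasDerivAt (hasDerivAt_mirrorPair_fst hF)
    (hasDerivAt_mirrorPair_snd hG) (fun a b => ?_) (fun a b => ?_) a b a' b'
  · rw [abs_neg]; exact abs_mirrorPair_le hε' hF'0 hF'M hGC a b
  · rw [abs_neg]; exact abs_mirrorPair_le hε' hF0 hFM hG'C a b

end MirrorPair

theorem hardFun_eq {d : ℕ} (x : EuclideanSpace ℝ (Fin (d + 1))) :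
    hardFun x = mirrorPair (-1) ψfun φfun 1 (x 0) +
      ∑ j : Fin d, mirrorPair (-1) ψfun φfun (x j.castSucc) (x j.succ) := by
  simp [hardFun, mirrorPair, ψfun_of_nonpos (by norm_num : (-1 : ℝ) ≤ 0), sub_eq_add_neg]

theorem abs_mirrorPair_ψfun'_φfun_sub_le (a b a' b' : ℝ) :
    |mirrorPair 1 ψfun' φfun a b - mirrorPair 1 ψfun' φfun a' b'| ≤
      32.5 * 4.133 * |a - a'| + 4.47 * 1.6488 * |b - b'| :=
  abs_mirrorPair_sub_le (by norm_num) (fun _ => ψfun'_of_nonpos) (fun _ => ψfun''_of_nonpos)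
    hasDerivAt_ψfun' hasDerivAt_φfun abs_ψfun'_le abs_ψfun''_le abs_φfun_le abs_φfun'_le a b a' b'

theorem abs_mirrorPair_ψfun_φfun'_sub_le (a b a' b' : ℝ) :
    |mirrorPair 1 ψfun φfun' a b - mirrorPair 1 ψfun φfun' a' b'| ≤
      4.47 * 1.6488 * |a - a'| + 2.72 * 1 * |b - b'| :=
  abs_mirrorPair_sub_le (by norm_num) (fun _ => ψfun_of_nonpos) (fun _ => ψfun'_of_nonpos)
    hasDerivAt_ψfun hasDerivAt_φfun' abs_ψfun_le abs_ψfun'_le abs_φfun'_le abs_φfun''_le a b a' b'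

theorem one_le_mirrorPair_ψfun_φfun' {a b : ℝ} (ha : 1 ≤ |a|) (hb : |b| ≤ 1) :
    1 ≤ mirrorPair 1 ψfun φfun' a b := by
  have h₁ := mul_nonneg (ψfun_nonneg (-a)) (φfun'_pos (-b)).le
  have h₂ := mul_nonneg (ψfun_nonneg a) (φfun'_pos b).le
  rw [mirrorPair, one_mul]
  rcases le_abs'.1 ha with ha | ha
  · nlinarith [one_le_ψfun (z := -a) (by linarith), one_le_φfun' (z := -b) (by rwa [abs_neg])]
  · nlinarith [one_le_ψfun ha, one_le_φfun' hb]

theorem mirrorPair_ψfun'_φfun_nonneg (a b : ℝ) : 0 ≤ mirrorPair 1 ψfun' φfun a b := by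
  rw [mirrorPair, one_mul]
  exact add_nonneg (mul_nonneg (ψfun'_nonneg _) (φfun_nonneg _))
    (mul_nonneg (ψfun'_nonneg _) (φfun_nonneg _))

section Gradient

variable {d : ℕ}

/-- Setting `x₋₁ = 1` turns the first term of `h` into the link `(x₋₁, x₀)` of the chain. -/
def prevCoord (x : EuclideanSpace ℝ (Fin (d + 1))) : Fin (d + 1) → ℝ :=
  Fin.cons 1 fun j => x j.castSucc

/-- Coordinate `k` is the `b`-derivative of the link `(x_{k-1}, x_k)`. -/
def hardGradSnd (x : EuclideanSpace ℝ (Fin (d + 1))) : EuclideanSpace ℝ (Fin (d + 1)) :=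
  WithLp.toLp 2 fun k => -mirrorPair 1 ψfun φfun' (prevCoord x k) (x k)

/-- Coordinate `k` is the `a`-derivative of the link `(x_k, x_{k+1})`, and `0` for `k = d`. -/
def hardGradFst (x : EuclideanSpace ℝ (Fin (d + 1))) : EuclideanSpace ℝ (Fin (d + 1)) :=
  WithLp.toLp 2 (Fin.snoc (fun j : Fin d => -mirrorPair 1 ψfun' φfun (x j.castSucc) (x j.succ)) 0)

theorem hasGradientAt_hardFun (x : EuclideanSpace ℝ (Fin (d + 1))) :
    HasGradientAt hardFun (hardGradSnd x + hardGradFst x) x := by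
  rw [hasGradientAt_iff_hasFDerivAt]
  have hproj (i : Fin (d + 1)) := (EuclideanSpace.proj (𝕜 := ℝ) i).hasFDerivAt (x := x)
  have h := ((hasFDerivAt_const (1 : ℝ) x).mirrorPair (ε := -1) (hproj 0) hasDerivAt_ψfun
    hasDerivAt_φfun).add (HasFDerivAt.fun_sum (u := Finset.univ) fun (j : Fin d) _ =>
      (hproj j.castSucc).mirrorPair (ε := -1) (hproj j.succ) hasDerivAt_ψfun hasDerivAt_φfun)
  rw [show hardFun = _ from funext hardFun_eq]
  refine h.congr_fderiv ?_
  ext v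
  have hSnd : inner ℝ (hardGradSnd x) v = -(mirrorPair 1 ψfun φfun' 1 (x 0) * v 0) +
      ∑ j : Fin d, -(mirrorPair 1 ψfun φfun' (x j.castSucc) (x j.succ) * v j.succ) := by
    simp [hardGradSnd, PiLp.inner_apply, Fin.sum_univ_succ (n := d), prevCoord, mul_comm]
  have hFst : inner ℝ (hardGradFst x) v =
      ∑ j : Fin d, -(mirrorPair 1 ψfun' φfun (x j.castSucc) (x j.succ) * v j.castSucc) := by
    simp [hardGradFst, PiLp.inner_apply, Fin.sum_univ_castSucc (n := d), mul_comm]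
  simp only [neg_neg, PiLp.proj_apply, smul_zero, zero_add, neg_add_rev, Finset.sum_add_distrib,
    Finset.sum_neg_distrib, add_apply, neg_apply, smul_apply, smul_eq_mul, sum_apply, map_add,
    InnerProductSpace.toDual_apply_apply, hSnd, hFst]
  ring

theorem hardFun_zero_sub_le (x : EuclideanSpace ℝ (Fin (d + 1))) :
    hardFun (0 : EuclideanSpace ℝ (Fin (d + 1))) - hardFun x ≤ 12 * ((d : ℝ) + 1) := by
  have hlink (a b : ℝ) : -(2.72 * 4.133) ≤ mirrorPair (-1) ψfun φfun a b :=
    (abs_le.1 (abs_mirrorPair_le (by norm_num) (fun _ => ψfun_of_nonpos) abs_ψfun_le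
      abs_φfun_le a b)).1
  have hnonpos {a : ℝ} (ha : 0 ≤ a) (b : ℝ) : mirrorPair (-1) ψfun φfun a b ≤ 0 := by
    rw [mirrorPair, ψfun_of_nonpos (neg_nonpos.2 ha)]
    nlinarith [mul_nonneg (ψfun_nonneg a) (φfun_nonneg b)]
  have h0 : hardFun (0 : EuclideanSpace ℝ (Fin (d + 1))) ≤ 0 := by
    rw [hardFun_eq]
    exact add_nonpos (hnonpos zero_le_one _) (Finset.sum_nonpos fun j _ => hnonpos le_rfl _)
  have hx : -(2.72 * 4.133) * ((d : ℝ) + 1) ≤ hardFun x := by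
    rw [hardFun_eq]
    have := Finset.sum_le_sum fun (j : Fin d) (_ : j ∈ Finset.univ) =>
      hlink (x j.castSucc) (x j.succ)
    simp only [Finset.sum_const, Finset.card_univ, Fintype.card_fin, nsmul_eq_mul] at this
    linarith [hlink 1 (x 0)]
  linarith [(d.cast_nonneg : (0 : ℝ) ≤ d)]

theorem norm_hardGradSnd_sub_le (x y : EuclideanSpace ℝ (Fin (d + 1))) :
    ‖hardGradSnd x - hardGradSnd y‖ ≤ (4.47 * 1.6488 + 2.72 * 1) * ‖x - y‖ := by
  refine le_of_sq_le_sq ?_ (by positivity)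
  rw [EuclideanSpace.real_norm_sq_eq]
  refine sum_sq_le_of_abs_le (p := fun k => prevCoord x k - prevCoord y k) (q := fun k => (x - y) k)
    (by norm_num) (by norm_num) ?_ (EuclideanSpace.real_norm_sq_eq (x - y)).ge fun k => ?_
  · simpa [Fin.sum_univ_succ, prevCoord] using sum_sq_castSucc_le (x - y)
  · simp only [hardGradSnd, PiLp.sub_apply, neg_sub_neg]
    rw [abs_sub_comm]
    exact abs_mirrorPair_ψfun_φfun'_sub_le _ _ _ _

theorem norm_hardGradFst_sub_le (x y : EuclideanSpace ℝ (Fin (d + 1))) :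
    ‖hardGradFst x - hardGradFst y‖ ≤ (32.5 * 4.133 + 4.47 * 1.6488) * ‖x - y‖ := by
  refine le_of_sq_le_sq ?_ (by positivity)
  rw [EuclideanSpace.real_norm_sq_eq, Fin.sum_univ_castSucc]
  simp only [hardGradFst, PiLp.sub_apply, Fin.snoc_castSucc, Fin.snoc_last,
    sub_zero, ne_eq, OfNat.ofNat_ne_zero, not_false_eq_true, zero_pow, add_zero, neg_sub_neg]
  refine sum_sq_le_of_abs_le (p := fun j => (x - y) j.castSucc) (q := fun j => (x - y) j.succ)
    (by norm_num) (by norm_num) (sum_sq_castSucc_le _) (sum_sq_succ_le _) fun j => ?_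
  rw [abs_sub_comm]
  exact abs_mirrorPair_ψfun'_φfun_sub_le _ _ _ _

theorem norm_hardGrad_sub_le (x y : EuclideanSpace ℝ (Fin (d + 1))) :
    ‖(hardGradSnd x + hardGradFst x) - (hardGradSnd y + hardGradFst y)‖ ≤ 152 * ‖x - y‖ :=
  calc _ = ‖(hardGradSnd x - hardGradSnd y) + (hardGradFst x - hardGradFst y)‖ := by
        rw [add_sub_add_comm]
    _ ≤ _ := norm_add_le_of_le (norm_hardGradSnd_sub_le x y) (norm_hardGradFst_sub_le x y)
    _ ≤ 152 * ‖x - y‖ := by nlinarith [norm_nonneg (x - y)]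

theorem abs_hardGrad_apply_le (x : EuclideanSpace ℝ (Fin (d + 1))) (k : Fin (d + 1)) :
    |(hardGradSnd x + hardGradFst x) k| ≤ 23 := by
  have hSnd : |hardGradSnd x k| ≤ 2.72 * 1.6488 := by
    rw [hardGradSnd, PiLp.toLp_apply, abs_neg]
    exact abs_mirrorPair_le (by norm_num) (fun _ => ψfun_of_nonpos) abs_ψfun_le abs_φfun'_le _ _
  have hFst : |hardGradFst x k| ≤ 4.47 * 4.133 := by
    induction k using Fin.lastCases with
    | last => norm_num [hardGradFst]
    | cast j =>
      rw [hardGradFst, PiLp.toLp_apply, Fin.snoc_castSucc, abs_neg]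
      exact abs_mirrorPair_le (by norm_num) (fun _ => ψfun'_of_nonpos) abs_ψfun'_le abs_φfun_le _ _
  rw [PiLp.add_apply]
  linarith [abs_add_le (hardGradSnd x k) (hardGradFst x k)]

theorem exists_one_le_abs_hardGrad_apply (x : EuclideanSpace ℝ (Fin (d + 1)))
    (hx : x (Fin.last d) = 0) : ∃ k, 1 ≤ |(hardGradSnd x + hardGradFst x) k| := by
  obtain ⟨k, hk, hmin⟩ := wellFounded_lt.has_min {i | |x i| < 1} ⟨Fin.last d, by simp [hx]⟩
  have hprev : 1 ≤ |prevCoord x k| := by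
    induction k using Fin.cases with
    | zero => simp [prevCoord]
    | succ j =>
      rw [prevCoord, Fin.cons_succ]
      by_contra h
      exact hmin j.castSucc (not_le.1 h) Fin.castSucc_lt_succ
  have hSnd : hardGradSnd x k ≤ -1 := by
    rw [hardGradSnd, PiLp.toLp_apply]
    linarith [one_le_mirrorPair_ψfun_φfun' hprev hk.le]
  have hFst (i : Fin (d + 1)) : hardGradFst x i ≤ 0 := by
    induction i using Fin.lastCases with
    | last => simp [hardGradFst]
    | cast j =>
      rw [hardGradFst, PiLp.toLp_apply, Fin.snoc_castSucc, neg_nonpos]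
      exact mirrorPair_ψfun'_φfun_nonneg _ _
  refine ⟨k, le_abs.2 (Or.inr ?_)⟩
  rw [PiLp.add_apply]
  linarith [hFst k]

end Gradient

/-- properties of the hard function `h` on `ℝ^{d+1}`:
(1) `h(0) - inf h ≤ 12·(d+1)`; (2) `∇h` is `152`-Lipschitz; (3) `‖∇h(x)‖_∞ ≤ 23`;
(4) `‖∇h(x)‖_∞ ≥ 1` whenever the last coordinate of `x` vanishes. -/
theorem hardFun_properties (d : ℕ) :
    (∀ x : EuclideanSpace ℝ (Fin (d + 1)),
      hardFun (0 : EuclideanSpace ℝ (Fin (d + 1))) - hardFun x ≤ 12 * ((d : ℝ) + 1)) ∧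
    (∀ x y : EuclideanSpace ℝ (Fin (d + 1)),
      ‖gradient hardFun x - gradient hardFun y‖ ≤ 152 * ‖x - y‖) ∧
    (∀ x : EuclideanSpace ℝ (Fin (d + 1)), ∀ j : Fin (d + 1),
      |gradient hardFun x j| ≤ 23) ∧
    (∀ x : EuclideanSpace ℝ (Fin (d + 1)), x (Fin.last d) = 0 →
      ∃ j : Fin (d + 1), 1 ≤ |gradient hardFun x j|) := by
  have hgrad : gradient (hardFun (d := d)) = fun x => hardGradSnd x + hardGradFst x :=
    funext fun x => (hasGradientAt_hardFun x).gradient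
  simp only [hgrad]
  exact ⟨hardFun_zero_sub_le, norm_hardGrad_sub_le, abs_hardGrad_apply_le,
    exists_one_le_abs_hardGrad_apply⟩
end
end

section
/- Let f : ℝ^d → ℝ be differentiable and satisfy the zero-chain property prog(∇f(x)) ≤ prog(x) + 1 for all x ∈ ℝ^d. Let p ∈ (0,1], let Z be a Bernoulli(p) random variable, and define the stochastic gradient oracle O(x;Z) ∈ ℝ^d coordinate-wise by [O(x;Z)]_j = [∇f(x)]_j · (1 + 1{j > prog(x)}·(Z/p − 1)) for j = 1,…,d. Then for every x ∈ ℝ^d: (1) E[O(x;Z)] = ∇f(x); and (2) E[‖O(x;Z) − ∇f(x)‖²] = |[∇f(x)]_{prog(x)+1}|² · (1−p)/p ≤ ‖∇f(x)‖_∞² · (1−p)/p, where [∇f(x)]_{prog(x)+1} is interpreted as 0 when prog(x) = d. -/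
/-! Writing `g = ∇f(x)` and `v` for `g` with its first `prog x` coordinates set to zero, the
oracle is `O(x;Z) = g + (Z/p - 1) v`. The zero-chain property kills every coordinate of `g`
past `prog x + 1`, so `v` has at most the single nonzero coordinate `g_{prog x + 1}`. Since
`E[Z/p - 1] = 0` and `E[(Z/p - 1)²] = (1 - p)/p`, both claims follow. -/

set_option autoImplicit false
set_option maxHeartbeats 1000000

open MeasureTheory

noncomputable section

lemma le_progVec_of_apply_ne_zero {m : ℕ} (y : EuclideanSpace ℝ (Fin m)) {j : Fin m}
    (hj : y j ≠ 0) : (j : ℕ) + 1 ≤ progVec y :=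
  le_csSup ⟨m, fun _ ⟨i, _, hk⟩ => hk ▸ i.isLt⟩ ⟨j, hj, rfl⟩

lemma apply_eq_zero_of_progVec_le {m : ℕ} (y : EuclideanSpace ℝ (Fin m)) {n : ℕ}
    (hy : progVec y ≤ n + 1) {j : Fin m} (hj : n < j) : y j = 0 := by
  by_contra hne
  have := le_progVec_of_apply_ne_zero y hne
  omega

def tailVec {m : ℕ} (n : ℕ) (y : EuclideanSpace ℝ (Fin m)) : EuclideanSpace ℝ (Fin m) :=
  WithLp.toLp 2 fun j => if n ≤ (j : ℕ) then y j else 0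

lemma norm_tailVec_sq {m n : ℕ} (y : EuclideanSpace ℝ (Fin m))
    (hy : ∀ j : Fin m, n < j → y j = 0) :
    ‖tailVec n y‖ ^ 2 = (if h : n < m then y ⟨n, h⟩ else 0) ^ 2 := by
  rw [EuclideanSpace.norm_sq_eq]
  split_ifs with h
  · rw [Finset.sum_eq_single ⟨n, h⟩]
    · simp [tailVec]
    · intro j _ hjn
      rcases lt_or_ge n j with hlt | hle
      · simp [tailVec, hy j hlt]
      · have : ¬ n ≤ (j : ℕ) := fun h' => hjn (Fin.ext (le_antisymm hle h'))
        simp [tailVec, this]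
    · simp
  · rw [zero_pow two_ne_zero]
    refine Finset.sum_eq_zero fun j _ => ?_
    have : ¬ n ≤ (j : ℕ) := by omega
    simp [tailVec, this]

lemma sq_dite_le_sq_iSup_abs {m : ℕ} (y : Fin m → ℝ) (n : ℕ) :
    (if h : n < m then y ⟨n, h⟩ else 0) ^ 2 ≤ (⨆ j, |y j|) ^ 2 := by
  have hbdd : BddAbove (Set.range fun j => |y j|) := (Set.finite_range _).bddAbove
  have habs : |if h : n < m then y ⟨n, h⟩ else 0| ≤ ⨆ j, |y j| := by
    split_ifs
    · exact le_ciSup hbdd _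
    · simpa using Real.iSup_nonneg fun j => abs_nonneg (y j)
  simpa only [sq_abs] using pow_le_pow_left₀ (abs_nonneg _) habs 2

lemma integral_comp_of_bernoulli {Ω E : Type*} [MeasurableSpace Ω] [NormedAddCommGroup E]
    [NormedSpace ℝ E] [CompleteSpace E] {μ : Measure Ω} [IsProbabilityMeasure μ]
    {Z : Ω → ℝ} {p : ℝ} (hp : 0 ≤ p) (hZmeas : Measurable Z) (hZval : ∀ ω, Z ω = 0 ∨ Z ω = 1)
    (hZp : μ {ω | Z ω = 1} = ENNReal.ofReal p) (g : ℝ → E) :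
    ∫ ω, g (Z ω) ∂μ = p • g 1 + (1 - p) • g 0 := by
  set S := {ω | Z ω = 1}
  have hS : MeasurableSet S := hZmeas (measurableSet_singleton 1)
  have hsplit : (fun ω => g (Z ω)) =
      fun ω => S.indicator (fun _ => g 1) ω + Sᶜ.indicator (fun _ => g 0) ω := by
    funext ω
    rcases hZval ω with h | h <;> simp [S, h]
  have hμS : μ.real S = p := by rw [measureReal_def, hZp, ENNReal.toReal_ofReal hp]
  rw [hsplit,
    integral_add ((integrable_const _).indicator hS) ((integrable_const _).indicator hS.compl),
    integral_indicator_const _ hS, integral_indicator_const _ hS.compl, measureReal_compl hS, hμS,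
    probReal_univ]

theorem bernoulli_oracle_properties_general (d : ℕ)
    (f : EuclideanSpace ℝ (Fin d) → ℝ)
    (hchain : ∀ x, progVec (gradient f x) ≤ progVec x + 1)
    (p : ℝ) (hp0 : 0 < p) (hp1 : p ≤ 1)
    {Ω : Type} [MeasurableSpace Ω] (μ : Measure Ω) [IsProbabilityMeasure μ]
    (Z : Ω → ℝ) (hZmeas : Measurable Z)
    (hZval : ∀ ω, Z ω = 0 ∨ Z ω = 1)
    (hZp : μ {ω | Z ω = 1} = ENNReal.ofReal p)
    (O : EuclideanSpace ℝ (Fin d) → Ω → EuclideanSpace ℝ (Fin d))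
    (hO : ∀ x ω j, O x ω j =
      gradient f x j * (1 + (if progVec x ≤ (j : ℕ) then Z ω / p - 1 else 0))) :
    ∀ x : EuclideanSpace ℝ (Fin d),
      (∫ ω, O x ω ∂μ) = gradient f x ∧
      (∫ ω, ‖O x ω - gradient f x‖ ^ 2 ∂μ)
        = (if h : progVec x < d then gradient f x ⟨progVec x, h⟩ else 0) ^ 2
            * ((1 - p) / p) ∧
      (∫ ω, ‖O x ω - gradient f x‖ ^ 2 ∂μ)
        ≤ (⨆ j : Fin d, |gradient f x j|) ^ 2 * ((1 - p) / p) := by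
  intro x
  set g := gradient f x
  set v := tailVec (progVec x) g
  have hOv : ∀ ω, O x ω = g + (Z ω / p - 1) • v := fun ω => by
    ext j
    rw [hO]
    by_cases h : progVec x ≤ (j : ℕ) <;>
      simp only [v, tailVec, h, PiLp.add_apply, PiLp.smul_apply, smul_eq_mul, if_true,
        if_false] <;> ring
  have hmean : ∫ ω, O x ω ∂μ = g := by
    simp_rw [hOv]
    rw [integral_comp_of_bernoulli hp0.le hZmeas hZval hZp fun z => g + (z / p - 1) • v]
    have hcentered : p * (1 / p - 1) + (1 - p) * (0 / p - 1) = 0 := by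
      field_simp
      ring
    rw [smul_add, smul_add, smul_smul, smul_smul, add_add_add_comm, ← add_smul, ← add_smul,
      hcentered, add_sub_cancel, one_smul, zero_smul, add_zero]
  have hvar : ∫ ω, ‖O x ω - g‖ ^ 2 ∂μ = ‖v‖ ^ 2 * ((1 - p) / p) := by
    simp_rw [hOv, add_sub_cancel_left]
    rw [integral_comp_of_bernoulli hp0.le hZmeas hZval hZp fun z => ‖(z / p - 1) • v‖ ^ 2]
    simp only [norm_smul, mul_pow, Real.norm_eq_abs, sq_abs, smul_eq_mul]
    field_simp
    ring
  rw [norm_tailVec_sq g fun j => apply_eq_zero_of_progVec_le g (hchain x)] at hvar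
  refine ⟨hmean, hvar, hvar ▸ ?_⟩
  exact mul_le_mul_of_nonneg_right (sq_dite_le_sq_iSup_abs _ _)
    (div_nonneg (sub_nonneg.2 hp1) hp0.le)

/-- the Bernoulli stochastic gradient oracle: for a differentiable
zero-chain function `f` on `ℝ^d`, a Bernoulli(`p`) random variable `Z`, and the oracle
`[O(x;Z)]_j = [∇f(x)]_j (1 + 1{j > prog x}(Z/p - 1))`, one has `E[O(x;Z)] = ∇f(x)` and
`E[‖O(x;Z) - ∇f(x)‖²] = |[∇f(x)]_{prog x + 1}|² (1-p)/p ≤ ‖∇f(x)‖_∞² (1-p)/p`. -/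
theorem bernoulli_oracle_properties (d : ℕ)
    (f : EuclideanSpace ℝ (Fin d) → ℝ)
    (hdiff : Differentiable ℝ f)
    (hchain : ∀ x, progVec (gradient f x) ≤ progVec x + 1)
    (p : ℝ) (hp0 : 0 < p) (hp1 : p ≤ 1)
    {Ω : Type} [MeasurableSpace Ω] (μ : Measure Ω) [IsProbabilityMeasure μ]
    (Z : Ω → ℝ) (hZmeas : Measurable Z)
    (hZval : ∀ ω, Z ω = 0 ∨ Z ω = 1)
    (hZp : μ {ω | Z ω = 1} = ENNReal.ofReal p)
    (O : EuclideanSpace ℝ (Fin d) → Ω → EuclideanSpace ℝ (Fin d))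
    (hO : ∀ x ω j, O x ω j =
      gradient f x j * (1 + (if progVec x ≤ (j : ℕ) then Z ω / p - 1 else 0))) :
    ∀ x : EuclideanSpace ℝ (Fin d),
      (∫ ω, O x ω ∂μ) = gradient f x ∧
      (∫ ω, ‖O x ω - gradient f x‖ ^ 2 ∂μ)
        = (if h : progVec x < d then gradient f x ⟨progVec x, h⟩ else 0) ^ 2
            * ((1 - p) / p) ∧
      (∫ ω, ‖O x ω - gradient f x‖ ^ 2 ∂μ)
        ≤ (⨆ j : Fin d, |gradient f x j|) ^ 2 * ((1 - p) / p) :=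
  bernoulli_oracle_properties_general d f hchain p hp0 hp1 μ Z hZmeas hZval hZp O hO

end
end

section
/- Let n ≥ 1, d ≥ 1, ρ ∈ [0,1), γ ≥ 0, and let W ∈ ℝ^{n×n} satisfy W𝟙 = 𝟙, 𝟙ᵀW = 𝟙ᵀ, and ‖W − (1/n)𝟙𝟙ᵀ‖₂ ≤ ρ. Let x, h ∈ ℝ^{n×d} and set x' = W(x − γh). Then, with Π = I_n − (1/n)𝟙𝟙ᵀ, ‖Πx'‖_F² ≤ (2ρ²/(1+ρ²))·‖Πx‖_F² + (2γ²ρ²/(1−ρ²))·‖Πh‖_F². -/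
set_option autoImplicit false
set_option maxHeartbeats 1000000

open Matrix MeasureTheory

noncomputable section

/-!
Since `W` fixes `𝟙` on both sides, the centering `Π = I - J` (with `J = (1/n)𝟙𝟙ᵀ`) satisfies
`Π W = W - J = (W - J) Π`, so `Π x' = (W - J)(Π x - γ Π h)`. As `‖A B‖_F ≤ ‖A‖₂ ‖B‖_F`, this gives
`‖Π x'‖_F ≤ ρ (‖Π x‖_F + |γ| ‖Π h‖_F)`, and the stated constants are Young's inequality
`(a + c)² ≤ (1 + t) a² + (1 + 1/t) c²` with `t = (1 - ρ²)/(1 + ρ²)`.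
-/

section FrobeniusAndSpectral

variable {m n d : ℕ}

lemma frobNorm_sq (M : Matrix (Fin m) (Fin n) ℝ) : frobNorm M ^ 2 = ∑ i, ∑ j, M i j ^ 2 :=
  Real.sq_sqrt (by positivity)

lemma frobNorm_nonneg (M : Matrix (Fin m) (Fin n) ℝ) : 0 ≤ frobNorm M :=
  Real.sqrt_nonneg _

open scoped Matrix.Norms.Frobenius in
lemma frobNorm_eq_norm (M : Matrix (Fin m) (Fin n) ℝ) : frobNorm M = ‖M‖ := by
  rw [frobenius_norm_def, frobNorm, Real.sqrt_eq_rpow]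
  simp [Real.norm_eq_abs, sq_abs]

open scoped Matrix.Norms.Frobenius in
lemma frobNorm_sub_le (A B : Matrix (Fin m) (Fin n) ℝ) :
    frobNorm (A - B) ≤ frobNorm A + frobNorm B := by
  simpa only [frobNorm_eq_norm] using norm_sub_le A B

open scoped Matrix.Norms.Frobenius in
lemma frobNorm_smul (c : ℝ) (M : Matrix (Fin m) (Fin n) ℝ) :
    frobNorm (c • M) = |c| * frobNorm M := by
  simp only [frobNorm_eq_norm, norm_smul, Real.norm_eq_abs]

open scoped Matrix.Norms.L2Operator in
lemma specNorm_eq_norm (M : Matrix (Fin m) (Fin n) ℝ) : specNorm M = ‖M‖ := rfl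

lemma specNorm_nonneg (M : Matrix (Fin m) (Fin n) ℝ) : 0 ≤ specNorm M :=
  norm_nonneg _

open scoped Matrix.Norms.L2Operator in
lemma sum_sq_mulVec_le_specNorm_sq (N : Matrix (Fin m) (Fin n) ℝ) (v : Fin n → ℝ) :
    ∑ i, (N *ᵥ v) i ^ 2 ≤ specNorm N ^ 2 * ∑ j, v j ^ 2 := by
  have h := pow_le_pow_left₀ (norm_nonneg _) (l2_opNorm_mulVec N (WithLp.toLp 2 v)) 2
  simpa [mul_pow, EuclideanSpace.real_norm_sq_eq, specNorm_eq_norm] using h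

lemma frobNorm_mul_le (N : Matrix (Fin m) (Fin n) ℝ) (M : Matrix (Fin n) (Fin d) ℝ) :
    frobNorm (N * M) ≤ specNorm N * frobNorm M := by
  refine le_of_sq_le_sq ?_ (mul_nonneg (specNorm_nonneg N) (frobNorm_nonneg M))
  rw [mul_pow, frobNorm_sq, frobNorm_sq]
  calc ∑ i, ∑ j, (N * M) i j ^ 2 = ∑ j, ∑ i, (N *ᵥ fun k => M k j) i ^ 2 := Finset.sum_comm
    _ ≤ ∑ j, specNorm N ^ 2 * ∑ i, M i j ^ 2 :=
      Finset.sum_le_sum fun j _ => sum_sq_mulVec_le_specNorm_sq N fun k => M k j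
    _ = specNorm N ^ 2 * ∑ i, ∑ j, M i j ^ 2 := by rw [← Finset.mul_sum, Finset.sum_comm]

end FrobeniusAndSpectral

section Averaging

variable {n : ℕ}

lemma onesMat_eq_vecMulVec : onesMat n = vecMulVec (onesVec n) (onesVec n) := by
  ext i j
  simp [onesMat, onesVec, vecMulVec_apply]

lemma avgMat_mul_avgMat : avgMat n * avgMat n = avgMat n := by
  rcases Nat.eq_zero_or_pos n with rfl | hn
  · exact Subsingleton.elim _ _
  have hJJ : onesMat n * onesMat n = (n : ℝ) • onesMat n := by
    rw [onesMat_eq_vecMulVec, vecMulVec_mul_vecMulVec, ← smul_vecMulVec]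
    simp [onesVec, dotProduct]
  rw [avgMat, Matrix.smul_mul, Matrix.mul_smul, hJJ, smul_smul, smul_smul]
  congr 1
  field_simp

lemma mul_avgMat {W : Matrix (Fin n) (Fin n) ℝ} (hW : W *ᵥ onesVec n = onesVec n) :
    W * avgMat n = avgMat n := by
  rw [avgMat, Matrix.mul_smul, onesMat_eq_vecMulVec, mul_vecMulVec, hW]

lemma avgMat_mul {W : Matrix (Fin n) (Fin n) ℝ} (hW : onesVec n ᵥ* W = onesVec n) :
    avgMat n * W = avgMat n := by
  rw [avgMat, Matrix.smul_mul, onesMat_eq_vecMulVec, vecMulVec_mul, hW]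

lemma one_sub_avgMat_mul_mul {W : Matrix (Fin n) (Fin n) ℝ} (hW1 : W *ᵥ onesVec n = onesVec n)
    (hW2 : onesVec n ᵥ* W = onesVec n) {d : ℕ} (y : Matrix (Fin n) (Fin d) ℝ) :
    (1 - avgMat n) * (W * y) = (W - avgMat n) * ((1 - avgMat n) * y) := by
  have hleft : (1 - avgMat n) * W = W - avgMat n := by
    rw [Matrix.sub_mul, Matrix.one_mul, avgMat_mul hW2]
  have hright : (W - avgMat n) * (1 - avgMat n) = W - avgMat n := by
    rw [Matrix.mul_sub, Matrix.mul_one, Matrix.sub_mul, mul_avgMat hW1, avgMat_mul_avgMat,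
      sub_self, sub_zero]
  rw [← Matrix.mul_assoc, ← Matrix.mul_assoc, hleft, hright]

end Averaging

lemma add_sq_le_weighted {a c t : ℝ} (ht : 0 < t) :
    (a + c) ^ 2 ≤ (1 + t) * a ^ 2 + (1 + t⁻¹) * c ^ 2 := by
  have hgap : (1 + t) * a ^ 2 + (1 + t⁻¹) * c ^ 2 - (a + c) ^ 2 = (t * a - c) ^ 2 / t := by
    field_simp
    ring
  rw [← sub_nonneg, hgap]
  positivity

lemma sq_mul_add_le_of_sq_lt_one {ρ a c : ℝ} (hρ : ρ ^ 2 < 1) :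
    (ρ * (a + c)) ^ 2 ≤ 2 * ρ ^ 2 / (1 + ρ ^ 2) * a ^ 2 + 2 * ρ ^ 2 / (1 - ρ ^ 2) * c ^ 2 := by
  have hp : 0 < 1 + ρ ^ 2 := by positivity
  have hm : 0 < 1 - ρ ^ 2 := by linarith
  have hY := add_sq_le_weighted (a := a) (c := c) (div_pos hm hp)
  have e1 : 2 * ρ ^ 2 / (1 + ρ ^ 2) = ρ ^ 2 * (1 + (1 - ρ ^ 2) / (1 + ρ ^ 2)) := by
    field_simp; ring
  have e2 : 2 * ρ ^ 2 / (1 - ρ ^ 2) = ρ ^ 2 * (1 + ((1 - ρ ^ 2) / (1 + ρ ^ 2))⁻¹) := by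
    field_simp; ring
  rw [e1, e2, mul_pow, mul_assoc, mul_assoc, ← mul_add]
  exact mul_le_mul_of_nonneg_left hY (sq_nonneg ρ)

theorem consensus_one_step_general (n d : ℕ)
    (ρ : ℝ) (hρ1 : ρ < 1) (γ : ℝ)
    (W : Matrix (Fin n) (Fin n) ℝ)
    (hW1 : W *ᵥ onesVec n = onesVec n) (hW2 : onesVec n ᵥ* W = onesVec n)
    (hWρ : specNorm (W - avgMat n) ≤ ρ)
    (x h x' : Matrix (Fin n) (Fin d) ℝ) (hx' : x' = W * (x - γ • h)) :
    frobNorm ((1 - avgMat n) * x') ^ 2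
      ≤ (2 * ρ ^ 2 / (1 + ρ ^ 2)) * frobNorm ((1 - avgMat n) * x) ^ 2
        + (2 * γ ^ 2 * ρ ^ 2 / (1 - ρ ^ 2)) * frobNorm ((1 - avgMat n) * h) ^ 2 := by
  set P := 1 - avgMat n
  have hρ0 : 0 ≤ ρ := (specNorm_nonneg _).trans hWρ
  have hx'P : P * x' = (W - avgMat n) * (P * x - γ • (P * h)) := by
    rw [hx', one_sub_avgMat_mul_mul hW1 hW2, Matrix.mul_sub, Matrix.mul_smul]
  have hbound : frobNorm (P * x') ≤ ρ * (frobNorm (P * x) + |γ| * frobNorm (P * h)) := by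
    rw [hx'P]
    calc _ ≤ specNorm (W - avgMat n) * frobNorm (P * x - γ • (P * h)) := frobNorm_mul_le _ _
      _ ≤ ρ * (frobNorm (P * x) + |γ| * frobNorm (P * h)) := by
        gcongr
        · exact frobNorm_nonneg _
        · exact (frobNorm_sub_le _ _).trans_eq (by rw [frobNorm_smul])
  calc _ ≤ (ρ * (frobNorm (P * x) + |γ| * frobNorm (P * h))) ^ 2 :=
        pow_le_pow_left₀ (frobNorm_nonneg _) hbound 2
    _ ≤ _ := sq_mul_add_le_of_sq_lt_one (pow_lt_one₀ hρ0 hρ1 two_ne_zero)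
    _ = _ := by rw [mul_pow, sq_abs]; ring

/-- one-step consensus recursion, deterministic: for
`W ∈ W_{n,ρ}` and `x' = W(x - γh)`, with `Π = I - (1/n)𝟙𝟙ᵀ`,
`‖Πx'‖_F² ≤ (2ρ²/(1+ρ²))‖Πx‖_F² + (2γ²ρ²/(1-ρ²))‖Πh‖_F²`. -/
theorem consensus_one_step (n d : ℕ) (hn : 1 ≤ n) (hd : 1 ≤ d)
    (ρ : ℝ) (hρ0 : 0 ≤ ρ) (hρ1 : ρ < 1) (γ : ℝ) (hγ : 0 ≤ γ)
    (W : Matrix (Fin n) (Fin n) ℝ)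
    (hW1 : W *ᵥ onesVec n = onesVec n) (hW2 : onesVec n ᵥ* W = onesVec n)
    (hWρ : specNorm (W - avgMat n) ≤ ρ)
    (x h x' : Matrix (Fin n) (Fin d) ℝ) (hx' : x' = W * (x - γ • h)) :
    frobNorm ((1 - avgMat n) * x') ^ 2
      ≤ (2 * ρ ^ 2 / (1 + ρ ^ 2)) * frobNorm ((1 - avgMat n) * x) ^ 2
        + (2 * γ ^ 2 * ρ ^ 2 / (1 - ρ ^ 2)) * frobNorm ((1 - avgMat n) * h) ^ 2 :=
  consensus_one_step_general n d ρ hρ1 γ W hW1 hW2 hWρ x h x' hx'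

end
end

section
/- Let ρ ∈ [0,1), L > 0, and γ > 0 with γ ≤ (1−ρ²)²/(9ρ²(1+ρ²)L) (this constraint being vacuous when ρ = 0). Define the nonnegative 2×2 matrix M with entries M₁₁ = M₂₂ = 2ρ²/(1+ρ²), M₁₂ = 2γ²ρ²L²/(1−ρ²), M₂₁ = 36ρ²/(1−ρ²). Then I − M is invertible with nonnegative inverse, and for every k ≥ 0 the partial sums satisfy, entrywise, Σ_{ℓ=0}^{k} M^ℓ ⪯ (I − M)^{−1} ⪯ N, where N is the 2×2 matrix with N₁₁ = N₂₂ = 9(1+ρ²)/(1−ρ²), N₁₂ = 18γ²ρ²(1+ρ²)²L²/(1−ρ²)³, and N₂₁ = 324ρ²(1+ρ²)²/(1−ρ²)³. -/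
set_option autoImplicit false
set_option maxHeartbeats 1000000

open Matrix

noncomputable section

/-- geometric sum bound for the 2×2 coupling matrix: with
`M₁₁ = M₂₂ = 2ρ²/(1+ρ²)`, `M₁₂ = 2γ²ρ²L²/(1-ρ²)`, `M₂₁ = 36ρ²/(1-ρ²)` and the step
size restriction `γ ≤ (1-ρ²)²/(9ρ²(1+ρ²)L)` (vacuous when `ρ = 0`), the matrix
`I - M` is invertible with nonnegative inverse, and entrywise
`Σ_{ℓ=0}^k M^ℓ ⪯ (I - M)⁻¹ ⪯ N`. -/
theorem coupling_matrix_geometric_sum (ρ L γ : ℝ)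
    (hρ0 : 0 ≤ ρ) (hρ1 : ρ < 1) (hL : 0 < L) (hγ0 : 0 < γ)
    (hγ : ρ = 0 ∨ γ ≤ (1 - ρ ^ 2) ^ 2 / (9 * ρ ^ 2 * (1 + ρ ^ 2) * L))
    (M N : Matrix (Fin 2) (Fin 2) ℝ)
    (hM : M = !![2 * ρ ^ 2 / (1 + ρ ^ 2), 2 * γ ^ 2 * ρ ^ 2 * L ^ 2 / (1 - ρ ^ 2);
                 36 * ρ ^ 2 / (1 - ρ ^ 2), 2 * ρ ^ 2 / (1 + ρ ^ 2)])
    (hN : N = !![9 * (1 + ρ ^ 2) / (1 - ρ ^ 2),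
                 18 * γ ^ 2 * ρ ^ 2 * (1 + ρ ^ 2) ^ 2 * L ^ 2 / (1 - ρ ^ 2) ^ 3;
                 324 * ρ ^ 2 * (1 + ρ ^ 2) ^ 2 / (1 - ρ ^ 2) ^ 3,
                 9 * (1 + ρ ^ 2) / (1 - ρ ^ 2)]) :
    IsUnit (1 - M) ∧
    (∀ i j, 0 ≤ (1 - M)⁻¹ i j) ∧
    (∀ k : ℕ, ∀ i j, (∑ ℓ ∈ Finset.range (k + 1), M ^ ℓ) i j ≤ (1 - M)⁻¹ i j) ∧
    (∀ i j, (1 - M)⁻¹ i j ≤ N i j) := by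
  have hq : (0:ℝ) < 1 - ρ ^ 2 := by nlinarith
  have hp : (0:ℝ) < 1 + ρ ^ 2 := by positivity
  set a : ℝ := 2 * ρ ^ 2 / (1 + ρ ^ 2) with ha
  set b : ℝ := 2 * γ ^ 2 * ρ ^ 2 * L ^ 2 / (1 - ρ ^ 2) with hb
  set c : ℝ := 36 * ρ ^ 2 / (1 - ρ ^ 2) with hc
  -- key inequality from the step size restriction
  have hkey : 81 * γ^2 * ρ^4 * L^2 * (1+ρ^2)^2 ≤ (1-ρ^2)^4 := by
    rcases hγ with h | h
    · rw [h]; norm_num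
    · by_cases hρz : ρ = 0
      · rw [hρz]; norm_num
      · have hρpos : 0 < ρ^2 := by positivity
        have hd : 0 < 9 * ρ ^ 2 * (1 + ρ ^ 2) * L := by positivity
        have h1 : γ * (9 * ρ ^ 2 * (1 + ρ ^ 2) * L) ≤ (1 - ρ^2)^2 := by
          rw [← le_div_iff₀ hd]; exact h
        have h0 : 0 ≤ γ * (9 * ρ ^ 2 * (1 + ρ ^ 2) * L) := by positivity
        nlinarith [mul_self_le_mul_self h0 h1]
  have hAq : 1 - a = (1-ρ^2)/(1+ρ^2) := by rw [ha]; field_simp; ring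
  have hApos : 0 < 1 - a := by rw [hAq]; positivity
  have hbnn : 0 ≤ b := by rw [hb]; exact div_nonneg (by positivity) hq.le
  have hcnn : 0 ≤ c := by rw [hc]; exact div_nonneg (by positivity) hq.le
  -- the matrix 1 - M explicitly
  have h1M : (1 : Matrix (Fin 2) (Fin 2) ℝ) - M = !![1 - a, -b; -c, 1 - a] := by
    subst hM; ext i j
    fin_cases i <;> fin_cases j <;>
      simp [Matrix.sub_apply, Matrix.one_apply]
  set d : ℝ := (1 - a)^2 - b * c with hd
  have hdet : (1 - M).det = d := by
    rw [h1M, Matrix.det_fin_two_of]; ring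
  -- bound b*c
  have hbc : b * c ≤ 8 * (1-ρ^2)^2 / (9 * (1+ρ^2)^2) := by
    have hbc' : b * c = 72*γ^2*ρ^4*L^2/(1-ρ^2)^2 := by
      rw [hb, hc, div_mul_div_comm]; ring_nf
    rw [hbc', div_le_div_iff₀ (by positivity) (by positivity)]
    nlinarith [hkey]
  have hdlb : (1-ρ^2)^2 / (9 * (1+ρ^2)^2) ≤ d := by
    have h4 : ((1-ρ^2)/(1+ρ^2))^2 - 8*(1-ρ^2)^2/(9*(1+ρ^2)^2)
        = (1-ρ^2)^2/(9*(1+ρ^2)^2) := by field_simp; ring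
    rw [hd, hAq]
    linarith
  have hdpos : 0 < d := lt_of_lt_of_le (by positivity) hdlb
  have hdu : IsUnit (1 - M).det := by
    rw [hdet]; exact (isUnit_iff_ne_zero).2 hdpos.ne'
  have hunit : IsUnit (1 - M) := (Matrix.isUnit_iff_isUnit_det _).2 hdu
  -- explicit inverse
  have hinv : (1 - M)⁻¹ = d⁻¹ • !![1 - a, b; c, 1 - a] := by
    rw [Matrix.inv_def, hdet, h1M, Matrix.adjugate_fin_two]
    ext i j
    fin_cases i <;> fin_cases j <;> simp [Matrix.smul_apply]
  have hDnn : 0 ≤ d⁻¹ := inv_nonneg.2 hdpos.le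
  have hinvnn : ∀ i j, 0 ≤ (1 - M)⁻¹ i j := by
    intro i j
    rw [hinv]
    fin_cases i <;> fin_cases j <;>
      simp [Matrix.smul_apply, smul_eq_mul] <;>
      positivity
  refine ⟨hunit, hinvnn, ?_, ?_⟩
  · -- partial sums
    intro k i j
    have hMnn : ∀ n : ℕ, ∀ i j, 0 ≤ (M ^ n) i j := by
      intro n
      induction n with
      | zero =>
        intro i j
        simp only [pow_zero]
        rcases eq_or_ne i j with h | h
        · simp [Matrix.one_apply, h]
        · simp [Matrix.one_apply, h]
      | succ n ih =>
        intro i j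
        rw [pow_succ, Matrix.mul_apply]
        refine Finset.sum_nonneg fun x _ => mul_nonneg (ih i x) ?_
        subst hM
        fin_cases x <;> fin_cases j <;>
          simp <;>
          first
            | exact div_nonneg (by positivity) hq.le
            | exact div_nonneg (by positivity) hp.le
    have hgs : (1 - M) * (∑ ℓ ∈ Finset.range (k+1), M^ℓ) = 1 - M^(k+1) :=
      mul_neg_geom_sum M (k+1)
    have hS : (∑ ℓ ∈ Finset.range (k+1), M^ℓ)
        = (1 - M)⁻¹ - (1 - M)⁻¹ * M^(k+1) := by
      have h5 := congrArg (fun X => (1 - M)⁻¹ * X) hgs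
      simp only [← Matrix.mul_assoc, Matrix.nonsing_inv_mul _ hdu, Matrix.one_mul,
        Matrix.mul_sub, Matrix.mul_one] at h5
      exact h5
    rw [hS, Matrix.sub_apply]
    have : 0 ≤ ((1 - M)⁻¹ * M ^ (k+1)) i j := by
      rw [Matrix.mul_apply]
      exact Finset.sum_nonneg fun x _ => mul_nonneg (hinvnn i x) (hMnn (k+1) x j)
    linarith
  · -- upper bound by N
    intro i j
    have hDle : d⁻¹ ≤ 9 * (1+ρ^2)^2 / (1-ρ^2)^2 := by
      have h6 : ((1-ρ^2)^2 / (9 * (1+ρ^2)^2))⁻¹ = 9 * (1+ρ^2)^2 / (1-ρ^2)^2 := by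
        rw [inv_div]
      rw [← h6]
      exact inv_anti₀ (by positivity) hdlb
    have key : ∀ e n : ℝ, 0 ≤ e → (9 * (1+ρ^2)^2 / (1-ρ^2)^2) * e = n → d⁻¹ * e ≤ n := by
      intro e n he hn
      rw [← hn]
      exact mul_le_mul_of_nonneg_right hDle he
    rw [hinv]
    subst hN
    fin_cases i <;> fin_cases j <;>
      simp [Matrix.smul_apply, smul_eq_mul]
    · exact key _ _ hApos.le (by rw [hAq]; field_simp)
    · exact key _ _ hbnn (by rw [hb]; field_simp; ring)
    · exact key _ _ hcnn (by rw [hc]; field_simp; ring)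
    · exact key _ _ hApos.le (by rw [hAq]; field_simp)

end
end
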